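/- arXiv:1603.04419 — 6 statements merged into one kernel-verified Lean document; each statement's English description precedes it below -/
import Mathlib

section
/- A nonnegative linear map does not expand the Hilbert metric: let A be a D×D real matrix with all entries nonnegative, and let x, y ∈ ℝ^D have all entries strictly positive. If the vectors A·x and A·y also have all entries strictly positive, then d_H(A·x, A·y) ≤ d_H(x, y). -/
/-- The Hilbert projective metric on the interior of the positive orthant of `ℝ^D`:
`d_H(x,y) = log ((max_i x_i/y_i) / (min_i x_i/y_i))`. -/
noncomputable def dH {D : ℕ} (x y : Fin D → ℝ) : ℝ :=
  Real.log ((⨆ i, x i / y i) / ⨅ i, x i / y i)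

/-!
If `m • y ≤ x ≤ M • y` coordinatewise, with `M` and `m` the largest and smallest of the ratios
`x i / y i`, then applying a nonnegative matrix preserves both inequalities:
`m • A y ≤ A x ≤ M • A y`. Hence the extreme ratios of `A x` to `A y` lie in `[m, M]`, and the
Hilbert distance can only shrink.
-/

open Matrix

theorem Matrix.mulVec_le_mulVec_of_nonneg {m n R : Type*} [Fintype n] [Semiring R]
    [PartialOrder R] [IsOrderedRing R] {A : Matrix m n R} (hA : ∀ i j, 0 ≤ A i j)
    {u v : n → R} (huv : u ≤ v) : A *ᵥ u ≤ A *ᵥ v :=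
  fun i => dotProduct_le_dotProduct_of_nonneg_left huv (hA i)

section Ratios

variable {ι : Type*} {x y : ι → ℝ}

theorem iSup_div_le_of_le_smul [Nonempty ι] {c : ℝ} (hy : ∀ i, 0 < y i) (h : x ≤ c • y) :
    ⨆ i, x i / y i ≤ c :=
  ciSup_le fun i => (div_le_iff₀ (hy i)).mpr (h i)

theorem le_iInf_div_of_smul_le [Nonempty ι] {c : ℝ} (hy : ∀ i, 0 < y i) (h : c • y ≤ x) :
    c ≤ ⨅ i, x i / y i :=
  le_ciInf fun i => (le_div_iff₀ (hy i)).mpr (h i)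

variable [Fintype ι]

theorem le_iSup_div_smul (hy : ∀ i, 0 < y i) : x ≤ (⨆ i, x i / y i) • y :=
  fun i => (div_le_iff₀ (hy i)).mp <|
    le_ciSup (f := fun i => x i / y i) (Set.finite_range _).bddAbove i

theorem iInf_div_smul_le (hy : ∀ i, 0 < y i) : (⨅ i, x i / y i) • y ≤ x :=
  fun i => (le_div_iff₀ (hy i)).mp <|
    ciInf_le (f := fun i => x i / y i) (Set.finite_range _).bddBelow i

variable [Nonempty ι]

theorem iInf_div_le_iSup_div : ⨅ i, x i / y i ≤ ⨆ i, x i / y i :=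
  ciInf_le_ciSup (Set.finite_range _).bddBelow (Set.finite_range _).bddAbove

theorem iInf_div_pos (hx : ∀ i, 0 < x i) (hy : ∀ i, 0 < y i) : 0 < ⨅ i, x i / y i := by
  obtain ⟨i, hi⟩ := exists_eq_ciInf_of_finite (f := fun i => x i / y i)
  exact hi ▸ div_pos (hx i) (hy i)

end Ratios

theorem nonnegative_map_does_not_expand_hilbert_metric_general
    (D : ℕ) (A : Matrix (Fin D) (Fin D) ℝ) (hA : ∀ i j, 0 ≤ A i j)
    (x y : Fin D → ℝ) (hx : ∀ i, 0 < x i) (hy : ∀ i, 0 < y i)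
    (hAy : ∀ i, 0 < A.mulVec y i) :
    dH (A.mulVec x) (A.mulVec y) ≤ dH x y := by
  cases isEmpty_or_nonempty (Fin D)
  · rw [Subsingleton.elim (A *ᵥ x) x, Subsingleton.elim (A *ᵥ y) y]
  have hm : 0 < ⨅ i, x i / y i := iInf_div_pos hx hy
  have hsup : ⨆ i, (A *ᵥ x) i / (A *ᵥ y) i ≤ ⨆ i, x i / y i := by
    refine iSup_div_le_of_le_smul hAy ?_
    simpa only [mulVec_smul] using mulVec_le_mulVec_of_nonneg hA (le_iSup_div_smul hy)
  have hinf : ⨅ i, x i / y i ≤ ⨅ i, (A *ᵥ x) i / (A *ᵥ y) i := by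
    refine le_iInf_div_of_smul_le hAy ?_
    simpa only [mulVec_smul] using mulVec_le_mulVec_of_nonneg hA (iInf_div_smul_le hy)
  have hAm : 0 < ⨅ i, (A *ᵥ x) i / (A *ᵥ y) i := hm.trans_le hinf
  have hAM : 0 < ⨆ i, (A *ᵥ x) i / (A *ᵥ y) i := hAm.trans_le iInf_div_le_iSup_div
  exact Real.log_le_log (div_pos hAM hAm) (div_le_div₀ (hAM.le.trans hsup) hsup hm hinf)

theorem nonnegative_map_does_not_expand_hilbert_metric
    (D : ℕ) (A : Matrix (Fin D) (Fin D) ℝ) (hA : ∀ i j, 0 ≤ A i j)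
    (x y : Fin D → ℝ) (hx : ∀ i, 0 < x i) (hy : ∀ i, 0 < y i)
    (hAx : ∀ i, 0 < A.mulVec x i) (hAy : ∀ i, 0 < A.mulVec y i) :
    dH (A.mulVec x) (A.mulVec y) ≤ dH x y :=
  nonnegative_map_does_not_expand_hilbert_metric_general D A hA x y hx hy hAy
end

section
/- Birkhoff's contraction theorem: let A be a D×D real matrix with all entries strictly positive, let Δ(A) := sup{d_H(A·u, A·v) : u, v ∈ ℝ^D with all entries strictly positive} be its projective diameter, and let k(A) := inf{λ ≥ 0 : d_H(A·x, A·y) ≤ λ·d_H(x,y) for all x, y ∈ ℝ^D with all entries strictly positive} be its contraction ratio. Then k(A) = tanh(Δ(A)/4); in particular, since Δ(A) < ∞, A is a strict contraction of the Hilbert metric: d_H(A·x, A·y) ≤ tanh(Δ(A)/4)·d_H(x, y) with tanh(Δ(A)/4) < 1. -/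
/-- The projective diameter `Δ(A) = sup {d_H(Au, Av) : u, v ≻ 0}`. -/
noncomputable def projDiam {D : ℕ} (A : Matrix (Fin D) (Fin D) ℝ) : ℝ :=
  sSup {d : ℝ | ∃ u v : Fin D → ℝ, (∀ i, 0 < u i) ∧ (∀ i, 0 < v i) ∧
    d = dH (A.mulVec u) (A.mulVec v)}

/-- The contraction ratio
`k(A) = inf {λ ≥ 0 : d_H(Ax, Ay) ≤ λ d_H(x,y) for all x, y ≻ 0}`. -/
noncomputable def contrRatio {D : ℕ} (A : Matrix (Fin D) (Fin D) ℝ) : ℝ :=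
  sInf {l : ℝ | 0 ≤ l ∧ ∀ x y : Fin D → ℝ, (∀ i, 0 < x i) → (∀ i, 0 < y i) →
    dH (A.mulVec x) (A.mulVec y) ≤ l * dH x y}

open Real Filter Topology Set Matrix

theorem tanh_log_div_two {f : ℝ} (hf : 0 < f) : tanh (log f / 2) = (f - 1) / (f + 1) := by
  have hs : √f ^ 2 = f := sq_sqrt hf.le
  have := sqrt_pos.2 hf
  rw [← log_sqrt hf.le, tanh_eq, exp_neg, exp_log this]
  conv_rhs => rw [← hs]
  field_simp

theorem HasDerivAt.nonpos_of_forall_Ioi_le {F : ℝ → ℝ} {F' a : ℝ} (hF : HasDerivAt F F' a)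
    (h : ∀ x ∈ Ioi a, F x ≤ F a) : F' ≤ 0 := by
  refine le_of_tendsto hF.tendsto_slope_zero_right ?_
  filter_upwards [self_mem_nhdsWithin] with t (ht : 0 < t)
  exact smul_nonpos_of_nonneg_of_nonpos (inv_nonneg.2 ht.le)
    (sub_nonpos.2 (h _ (lt_add_of_pos_right a ht)))

section LogRatio

variable {f : ℝ}

theorem hasDerivAt_log_one_add_mul_sub_log_add (hf : 0 ≤ f) {g : ℝ} (hg : 0 < g) :
    HasDerivAt (fun g => log (1 + f * g) - log (f + g))
      ((f ^ 2 - 1) / ((1 + f * g) * (f + g))) g := by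
  have h1 : 1 + f * g ≠ 0 := by positivity
  have h2 : f + g ≠ 0 := by positivity
  have h := ((((hasDerivAt_id' g).const_mul f).const_add 1).log h1).sub
    (((hasDerivAt_id' g).const_add f).log h2)
  refine h.congr_deriv ?_
  field_simp
  ring

theorem log_one_add_mul_sub_log_add_le (hf : 1 ≤ f) {g : ℝ} (hg : 1 ≤ g) :
    log (1 + f * g) - log (f + g) ≤ (f - 1) / (f + 1) * log g := by
  set F : ℝ → ℝ := fun g => (f - 1) / (f + 1) * log g - (log (1 + f * g) - log (f + g))
  have hF : ∀ g ∈ Ioi (0 : ℝ), HasDerivAt F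
      ((f - 1) / (f + 1) * g⁻¹ - (f ^ 2 - 1) / ((1 + f * g) * (f + g))) g := fun g hg =>
    ((hasDerivAt_log (ne_of_gt hg)).const_mul _).sub
      (hasDerivAt_log_one_add_mul_sub_log_add (by linarith) hg)
  have hmono : MonotoneOn F (Ici 1) := by
    refine monotoneOn_of_hasDerivWithinAt_nonneg (convex_Ici 1)
      (fun g hg => (hF g (lt_of_lt_of_le one_pos (mem_Ici.1 hg))).continuousAt.continuousWithinAt)
      (fun g hg => (hF g ?_).hasDerivWithinAt) fun g hg => ?_
    · rw [interior_Ici] at hg; exact lt_trans one_pos (mem_Ioi.1 hg)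
    rw [interior_Ici] at hg
    have hg0 : 0 < g := lt_trans one_pos hg
    have : (f - 1) / (f + 1) * g⁻¹ - (f ^ 2 - 1) / ((1 + f * g) * (f + g))
        = (f - 1) * f * (g - 1) ^ 2 / ((f + 1) * g * (1 + f * g) * (f + g)) := by
      field_simp; ring
    rw [this]
    have : 0 ≤ (f - 1) * f := mul_nonneg (by linarith) (by linarith)
    positivity
  have := hmono self_mem_Ici hg hg
  simp only [F, log_one, mul_zero, mul_one, add_comm 1 f, sub_self] at this
  linarith

theorem le_of_forall_log_one_add_mul_sub_log_add_le (hf : 0 ≤ f) {c : ℝ}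
    (h : ∀ g ∈ Ioi (1 : ℝ), log (1 + f * g) - log (f + g) ≤ c * log g) :
    (f - 1) / (f + 1) ≤ c := by
  have hderiv := (hasDerivAt_log_one_add_mul_sub_log_add hf one_pos).sub
    ((hasDerivAt_log one_ne_zero).const_mul c)
  have := hderiv.nonpos_of_forall_Ioi_le fun g hg => by
    simpa [add_comm 1 f] using h g hg
  have hf1 : f + 1 ≠ 0 := by positivity
  rw [show (f ^ 2 - 1) / ((1 + f * 1) * (f + 1)) = (f - 1) / (f + 1) by field_simp; ring] at this
  linarith

end LogRatio

theorem monotoneOn_mul_add_div_add_one {a b : ℝ} (hab : a ≤ b) :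
    MonotoneOn (fun t : ℝ => (b * t + a) / (t + 1)) (Ici 0) :=
  fun s (hs : 0 ≤ s) t (ht : 0 ≤ t) hst => by
  rw [div_le_div_iff₀ (by linarith) (by linarith)]
  nlinarith [mul_nonneg (sub_nonneg.2 hab) (sub_nonneg.2 hst)]

theorem log_mul_add_div_add_one_sub_le {a b f q : ℝ} (ha : 0 < a) (hab : a ≤ b) (hf : 1 ≤ f)
    (hq : 0 ≤ q) :
    log ((b * (f ^ 2 * q) + a) / (f ^ 2 * q + 1)) - log ((b * q + a) / (q + 1)) ≤
      (f - 1) / (f + 1) * (log b - log a) := by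
  obtain ⟨g, hg, rfl⟩ : ∃ g, 1 ≤ g ∧ b = a * g ^ 2 :=
    ⟨√(b / a), one_le_sqrt.2 ((one_le_div ha).2 hab), by
      rw [sq_sqrt (div_pos (ha.trans_le hab) ha).le]; field_simp⟩
  have hquot : (a * g ^ 2 * (f ^ 2 * q) + a) / (f ^ 2 * q + 1)
      ≤ ((1 + f * g) / (f + g)) ^ 2 * ((a * g ^ 2 * q + a) / (q + 1)) := by
    rw [div_pow, div_mul_div_comm, div_le_div_iff₀ (by positivity) (by positivity)]
    -- `(1 + f g)² (f² q + 1) (g² q + 1) - (f² g² q + 1) (q + 1) (f + g)²`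
    -- `  = (f² - 1) (g² - 1) (f g q - 1)²`
    have key : 0 ≤ a * ((f ^ 2 - 1) * (g ^ 2 - 1) * (f * g * q - 1) ^ 2) :=
      mul_nonneg ha.le (mul_nonneg (mul_nonneg (by nlinarith) (by nlinarith)) (sq_nonneg _))
    linear_combination key
  have hW := log_one_add_mul_sub_log_add_le hf hg
  rw [log_mul ha.ne' (by positivity), log_pow]
  calc _ ≤ log (((1 + f * g) / (f + g)) ^ 2) := by
        rw [sub_le_iff_le_add, ← log_mul (by positivity) (by positivity)]
        exact log_le_log (by positivity) hquot
    _ = 2 * (log (1 + f * g) - log (f + g)) := by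
        rw [log_pow, log_div (by positivity) (by positivity)]; push_cast; ring
    _ ≤ _ := by push_cast; linarith

theorem add_smul_one_pos {ι : Type*} {w : ι → ℝ} (hw : 0 ≤ w) {ε : ℝ} (hε : 0 < ε) (t : ι) :
    0 < (w + ε • 1) t := by
  simpa using add_pos_of_nonneg_of_pos (hw t) hε

theorem add_single_one_ne_zero {ι : Type*} [DecidableEq ι] {p : ι → ℝ} (hp : 0 ≤ p) (l : ι) :
    p + Pi.single l 1 ≠ 0 := fun h => by
  have := congrFun h l
  simp only [Pi.add_apply, Pi.single_eq_same, Pi.zero_apply] at this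
  linarith [show (0 : ℝ) ≤ p l from hp l]

section HilbertMetric

variable {D : ℕ} {x y : Fin D → ℝ}

theorem log_sub_le_dH (hx : ∀ i, 0 < x i) (hy : ∀ i, 0 < y i) (i j : Fin D) :
    log (x i / y i) - log (x j / y j) ≤ dH x y := by
  have : Nonempty (Fin D) := ⟨i⟩
  have hr : ∀ k, 0 < x k / y k := fun k => div_pos (hx k) (hy k)
  obtain ⟨m, hm⟩ := exists_eq_ciInf_of_finite (f := fun k => x k / y k)
  have hsup : x i / y i ≤ ⨆ k, x k / y k :=
    le_ciSup (f := fun k => x k / y k) (Finite.bddAbove_range _) i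
  have hinf : (⨅ k, x k / y k) ≤ x j / y j := ciInf_le (Finite.bddBelow_range _) j
  rw [← hm] at hinf
  rw [dH, ← hm, log_div (hr i |>.trans_le hsup).ne' (hr m).ne']
  linarith [log_le_log (hr i) hsup, log_le_log (hr m) hinf]

variable [NeZero D]

theorem dH_le_of_bounds {a b : ℝ} (ha : 0 < a) (hlo : ∀ i, a ≤ x i / y i)
    (hhi : ∀ i, x i / y i ≤ b) : dH x y ≤ log b - log a := by
  have hinf : a ≤ ⨅ i, x i / y i := le_ciInf hlo
  have hsup : (⨅ i, x i / y i) ≤ ⨆ i, x i / y i :=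
    (ciInf_le (Finite.bddBelow_range _) 0).trans
      (le_ciSup (f := fun i => x i / y i) (Finite.bddAbove_range _) 0)
  have hinf0 := ha.trans_le hinf
  rw [dH, log_div (hinf0.trans_le hsup).ne' hinf0.ne']
  linarith [log_le_log (hinf0.trans_le hsup) (ciSup_le hhi), log_le_log ha hinf]

theorem dH_smul_add_le {p w : Fin D → ℝ} (hp : 0 ≤ p) (hw : ∀ t, 0 < w t)
    {c : ℝ} (hc : 1 ≤ c) : dH (c • p + w) (p + w) ≤ log c := by
  have hpw : ∀ t, 0 < (p + w) t := fun t => add_pos_of_nonneg_of_pos (hp t) (hw t)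
  have hlo : ∀ t, 1 ≤ (c • p + w) t / (p + w) t := fun t => by
    rw [one_le_div (hpw t)]
    simp only [Pi.add_apply, Pi.smul_apply, smul_eq_mul]
    nlinarith [mul_nonneg (sub_nonneg.2 hc) (hp t)]
  have hhi : ∀ t, (c • p + w) t / (p + w) t ≤ c := fun t => by
    rw [div_le_iff₀ (hpw t)]
    simp only [Pi.add_apply, Pi.smul_apply, smul_eq_mul]
    nlinarith [mul_nonneg (sub_nonneg.2 hc) (hw t).le]
  simpa using dH_le_of_bounds one_pos hlo hhi

end HilbertMetric

section PositiveMatrix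

variable {m n : Type*} [Fintype n] {A : Matrix m n ℝ}

theorem mulVec_pos_of_nonneg (hA : ∀ i j, 0 < A i j) {u : n → ℝ} (hu : 0 ≤ u) (hu0 : u ≠ 0)
    (i : m) : 0 < (A *ᵥ u) i := by
  obtain ⟨k, hk⟩ := Function.ne_iff.1 hu0
  exact Finset.sum_pos' (fun l _ => mul_nonneg (hA i l).le (hu l))
    ⟨k, Finset.mem_univ _, mul_pos (hA i k) ((hu k).lt_of_ne' hk)⟩

theorem mulVec_pos [Nonempty n] (hA : ∀ i j, 0 < A i j) {u : n → ℝ} (hu : ∀ k, 0 < u k)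
    (i : m) : 0 < (A *ᵥ u) i :=
  mulVec_pos_of_nonneg hA (fun k => (hu k).le)
    (fun h => (hu (Classical.arbitrary n)).ne' (congrFun h _)) i

theorem mulVec_mul_mulVec_le {c : ℝ} (hc : ∀ i j k l, A i k * A j l ≤ c * (A j k * A i l))
    {u v : n → ℝ} (hu : 0 ≤ u) (hv : 0 ≤ v) (i j : m) :
    (A *ᵥ u) i * (A *ᵥ v) j ≤ c * ((A *ᵥ u) j * (A *ᵥ v) i) := by
  simp only [mulVec, dotProduct]
  rw [Finset.sum_mul_sum, Finset.sum_mul_sum, Finset.mul_sum]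
  refine Finset.sum_le_sum fun k _ => ?_
  rw [Finset.mul_sum]
  refine Finset.sum_le_sum fun l _ => ?_
  calc A i k * u k * (A j l * v l) = (A i k * A j l) * (u k * v l) := by ring
    _ ≤ c * (A j k * A i l) * (u k * v l) :=
        mul_le_mul_of_nonneg_right (hc i j k l) (mul_nonneg (hu k) (hv l))
    _ = c * (A j k * u k * (A i l * v l)) := by ring

theorem mulVec_div_mulVec_le (hA : ∀ i j, 0 < A i j) {c : ℝ}
    (hc : ∀ i j k l, A i k * A j l ≤ c * (A j k * A i l)) {u v : n → ℝ} (hu : 0 ≤ u) (hv : 0 ≤ v)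
    (hv0 : v ≠ 0) (i j : m) :
    (A *ᵥ u) i / (A *ᵥ v) i ≤ c * ((A *ᵥ u) j / (A *ᵥ v) j) := by
  rw [mul_div_assoc', div_le_div_iff₀ (mulVec_pos_of_nonneg hA hv hv0 i)
    (mulVec_pos_of_nonneg hA hv hv0 j)]
  exact (mulVec_mul_mulVec_le hc hu hv i j).trans_eq (by ring)

theorem exists_crossRatio_bound [Finite m] [Nonempty m] [Nonempty n] (hA : ∀ i j, 0 < A i j) :
    ∃ f : ℝ, 1 ≤ f ∧ (∀ i j k l, A i k * A j l ≤ f ^ 2 * (A j k * A i l)) ∧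
      ∃ i j k l, A i k * A j l = f ^ 2 * (A j k * A i l) := by
  obtain ⟨⟨i, j, k, l⟩, hmax⟩ := Finite.exists_max
    fun t : m × m × n × n => A t.1 t.2.2.1 * A t.2.1 t.2.2.2 / (A t.2.1 t.2.2.1 * A t.1 t.2.2.2)
  set φ := A i k * A j l / (A j k * A i l)
  have hφ : 1 ≤ φ := by
    obtain ⟨i', k'⟩ : Nonempty (m × n) := inferInstance
    simpa [div_self (mul_pos (hA i' k') (hA i' k')).ne'] using hmax (i', i', k', k')
  refine ⟨√φ, one_le_sqrt.2 hφ, fun i' j' k' l' => ?_, i, j, k, l, ?_⟩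
  · rw [sq_sqrt (by linarith), ← div_le_iff₀ (mul_pos (hA j' k') (hA i' l'))]
    exact hmax (i', j', k', l')
  · rw [sq_sqrt (by linarith), div_mul_cancel₀ _ (mul_pos (hA j k) (hA i l)).ne']

end PositiveMatrix

section Perturbation

variable {D : ℕ} {n : Type*} [Fintype n] [Nonempty n] {A : Matrix (Fin D) n ℝ}

theorem log_sub_le_of_forall_dH_mulVec_add_le (hA : ∀ i j, 0 < A i j) {u v : n → ℝ}
    (hu : 0 ≤ u) (hv : 0 ≤ v) (hu0 : u ≠ 0) (hv0 : v ≠ 0) {C : ℝ}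
    (hC : ∀ ε : ℝ, 0 < ε → dH (A *ᵥ (u + ε • 1)) (A *ᵥ (v + ε • 1)) ≤ C) (i j : Fin D) :
    log ((A *ᵥ u) i / (A *ᵥ v) i) - log ((A *ᵥ u) j / (A *ᵥ v) j) ≤ C := by
  have hlim : ∀ w : n → ℝ, ∀ k,
      Tendsto (fun ε : ℝ => (A *ᵥ (w + ε • 1)) k) (𝓝[>] 0) (𝓝 ((A *ᵥ w) k)) := fun w k => by
    have : Continuous fun ε : ℝ => (A *ᵥ (w + ε • 1)) k := by fun_prop
    simpa using this.tendsto 0 |>.mono_left nhdsWithin_le_nhds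
  have hne : ∀ w : n → ℝ, 0 ≤ w → w ≠ 0 → ∀ k, (A *ᵥ w) k ≠ 0 := fun w hw hw0 k =>
    (mulVec_pos_of_nonneg hA hw hw0 k).ne'
  have hratio : ∀ k, Tendsto (fun ε : ℝ => log ((A *ᵥ (u + ε • 1)) k / (A *ᵥ (v + ε • 1)) k))
      (𝓝[>] 0) (𝓝 (log ((A *ᵥ u) k / (A *ᵥ v) k))) := fun k =>
    ((hlim u k).div (hlim v k) (hne v hv hv0 k)).log
      (div_ne_zero (hne u hu hu0 k) (hne v hv hv0 k))
  refine le_of_tendsto ((hratio i).sub (hratio j)) ?_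
  filter_upwards [self_mem_nhdsWithin] with ε (hε : 0 < ε)
  exact (log_sub_le_dH (mulVec_pos hA (add_smul_one_pos hu hε))
    (mulVec_pos hA (add_smul_one_pos hv hε)) i j).trans (hC ε hε)

end Perturbation

section Contraction

variable {m n : ℕ} [NeZero m] {A : Matrix (Fin m) (Fin n) ℝ} {f : ℝ}

theorem dH_mulVec_le_of_lt (hA : ∀ i j, 0 < A i j) (hf : 1 ≤ f)
    (hmax : ∀ i j k l, A i k * A j l ≤ f ^ 2 * (A j k * A i l))
    {x y : Fin n → ℝ} (hy : ∀ i, 0 < y i) {a b : ℝ} (ha : 0 < a) (hab : a < b)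
    (hlo : ∀ i, a ≤ x i / y i) (hhi : ∀ i, x i / y i ≤ b) (hxa : x ≠ a • y) (hxb : x ≠ b • y) :
    dH (A *ᵥ x) (A *ᵥ y) ≤ (f - 1) / (f + 1) * (log b - log a) := by
  -- `(b - a) x = b u + a v` and `(b - a) y = u + v` with `u, v ≥ 0`, so every ratio
  -- `(A x)ᵢ / (A y)ᵢ` is the Möbius transform `t ↦ (b t + a) / (t + 1)` of `(A u)ᵢ / (A v)ᵢ`.
  set u := x - a • y
  set v := b • y - x
  have hu : 0 ≤ u := fun i => by simpa [u] using (le_div_iff₀ (hy i)).1 (hlo i)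
  have hv : 0 ≤ v := fun i => by simpa [v] using (div_le_iff₀ (hy i)).1 (hhi i)
  have hu0 : u ≠ 0 := sub_ne_zero.2 hxa
  have hv0 : v ≠ 0 := sub_ne_zero.2 hxb.symm
  set p := fun i => (A *ᵥ u) i / (A *ᵥ v) i
  have hp : ∀ i, 0 < p i := fun i =>
    div_pos (mulVec_pos_of_nonneg hA hu hu0 i) (mulVec_pos_of_nonneg hA hv hv0 i)
  have hratio : ∀ i, (A *ᵥ x) i / (A *ᵥ y) i = (b * p i + a) / (p i + 1) := fun i => by
    have hAu := mulVec_pos_of_nonneg hA hu hu0 i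
    have hAv := mulVec_pos_of_nonneg hA hv hv0 i
    have hx' : (b - a) * (A *ᵥ x) i = b * (A *ᵥ u) i + a * (A *ᵥ v) i := by
      simp only [u, v, mulVec_sub, mulVec_smul, Pi.sub_apply, Pi.smul_apply, smul_eq_mul]; ring
    have hy' : (b - a) * (A *ᵥ y) i = (A *ᵥ u) i + (A *ᵥ v) i := by
      simp only [u, v, mulVec_sub, mulVec_smul, Pi.sub_apply, Pi.smul_apply, smul_eq_mul]; ring
    rw [← mul_div_mul_left _ _ (sub_ne_zero.2 hab.ne'), hx', hy']
    simp only [p]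
    field_simp
  obtain ⟨jmin, hjmin⟩ := Finite.exists_min p
  have hmono := monotoneOn_mul_add_div_add_one hab.le
  have hAlo : ∀ i, (b * p jmin + a) / (p jmin + 1) ≤ (A *ᵥ x) i / (A *ᵥ y) i := fun i =>
    (hratio i).symm ▸ hmono (hp jmin).le (hp i).le (hjmin i)
  have hAhi : ∀ i,
      (A *ᵥ x) i / (A *ᵥ y) i ≤ (b * (f ^ 2 * p jmin) + a) / (f ^ 2 * p jmin + 1) :=
    fun i => (hratio i).symm ▸ hmono (hp i).le (mul_nonneg (sq_nonneg f) (hp jmin).le)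
      (mulVec_div_mulVec_le hA hmax hu hv hv0 i jmin)
  have hM : 0 < (b * p jmin + a) / (p jmin + 1) :=
    div_pos (by nlinarith [hp jmin]) (by linarith [hp jmin])
  exact (dH_le_of_bounds hM hAlo hAhi).trans
    (log_mul_add_div_add_one_sub_le ha hab.le hf (hp jmin).le)

theorem dH_mulVec_le [NeZero n] (hA : ∀ i j, 0 < A i j) (hf : 1 ≤ f)
    (hmax : ∀ i j k l, A i k * A j l ≤ f ^ 2 * (A j k * A i l))
    {x y : Fin n → ℝ} (hx : ∀ i, 0 < x i) (hy : ∀ i, 0 < y i) :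
    dH (A *ᵥ x) (A *ᵥ y) ≤ (f - 1) / (f + 1) * dH x y := by
  obtain ⟨imin, himin⟩ := Finite.exists_min fun i => x i / y i
  obtain ⟨imax, himax⟩ := Finite.exists_max fun i => x i / y i
  have ha : 0 < x imin / y imin := div_pos (hx imin) (hy imin)
  rw [le_antisymm (dH_le_of_bounds ha himin himax) (log_sub_le_dH hx hy imax imin)]
  have hsmul : ∀ i, ∀ c : ℝ, x = c • y → x i / y i = c := fun i c h => by
    rw [h]; exact mul_div_cancel_right₀ _ (hy i).ne'
  rcases (himin imax).eq_or_lt with hab | hab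
  · have hxy : x = (x imin / y imin) • y := funext fun i =>
      (div_eq_iff (hy i).ne').1 (le_antisymm (hab ▸ himax i) (himin i))
    have hAxy : A *ᵥ x = (x imin / y imin) • A *ᵥ y := by rw [← mulVec_smul, ← hxy]
    have hr : ∀ i, (A *ᵥ x) i / (A *ᵥ y) i = x imin / y imin := fun i => by
      rw [hAxy]; exact mul_div_cancel_right₀ _ (mulVec_pos hA hy i).ne'
    rw [← hab, sub_self, mul_zero, ← sub_self (log (x imin / y imin))]
    exact dH_le_of_bounds ha (fun i => (hr i).ge) (fun i => (hr i).le)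
  · exact dH_mulVec_le_of_lt hA hf hmax hy ha hab himin himax
      (fun h => hab.ne' (hsmul imax _ h)) (fun h => hab.ne (hsmul imin _ h))

end Contraction

theorem log_div_sub_log_div_eq_of_mul_eq {P Q R S f g σ : ℝ} (hP : 0 < P) (hQ : 0 < Q)
    (hR : 0 < R) (hS : 0 < S) (hf : 0 < f) (hg : 0 < g) (h : P * S = f ^ 2 * (R * Q))
    (hσ : f * g * R * σ = S) :
    log ((g ^ 2 * σ * P + Q) / (σ * P + Q)) - log ((g ^ 2 * σ * R + S) / (σ * R + S)) =
      2 * (log (1 + f * g) - log (f + g)) := by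
  have hσ0 : 0 < σ := (mul_pos_iff_of_pos_left (by positivity)).1 (hσ ▸ hS)
  have hP' : g * (σ * P) = f * Q := mul_left_cancel₀ (mul_pos hf hR).ne' <| by
    linear_combination P * hσ + h
  have h1 : (g ^ 2 * σ * P + Q) / (σ * P + Q) = g * (1 + f * g) / (f + g) := by
    rw [div_eq_div_iff (by positivity) (by positivity)]
    linear_combination (g ^ 2 - 1) * hP'
  have h2 : (g ^ 2 * σ * R + S) / (σ * R + S) = g * (f + g) / (1 + f * g) := by
    rw [div_eq_div_iff (by positivity) (by positivity)]
    linear_combination (g ^ 2 - 1) * hσ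
  rw [h1, h2, log_div (by positivity) (by positivity), log_div (by positivity) (by positivity),
    log_mul hg.ne' (by positivity), log_mul hg.ne' (by positivity)]
  ring

section Sharpness

variable {m n : ℕ} [NeZero n] {A : Matrix (Fin m) (Fin n) ℝ} {f : ℝ}

theorem le_of_forall_dH_mulVec_le (hA : ∀ i j, 0 < A i j) (hf : 0 < f) {i j : Fin m}
    {k l : Fin n} (hattain : A i k * A j l = f ^ 2 * (A j k * A i l)) {c : ℝ} (hc0 : 0 ≤ c)
    (hc : ∀ x y : Fin n → ℝ, (∀ i, 0 < x i) → (∀ i, 0 < y i) →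
      dH (A *ᵥ x) (A *ᵥ y) ≤ c * dH x y) :
    (f - 1) / (f + 1) ≤ c := by
  refine le_of_forall_log_one_add_mul_sub_log_add_le hf.le fun g (hg : 1 < g) => ?_
  have hg0 : 0 < g := by linarith
  -- `σ` makes rows `i` and `j` of `A` see the ratios `g (1 + f g) / (f + g)` and
  -- `g (f + g) / (1 + f g)` on the pair `(g² p + eₗ, p + eₗ)` below.
  set σ := A j l / (f * g * A j k)
  have hfgA : 0 < f * g * A j k := mul_pos (mul_pos hf hg0) (hA j k)
  have hσ : f * g * A j k * σ = A j l := mul_div_cancel₀ _ hfgA.ne'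
  have hσ0 : 0 < σ := div_pos (hA j l) hfgA
  set p : Fin n → ℝ := σ • Pi.single k 1
  have hp : 0 ≤ p := smul_nonneg hσ0.le (Pi.single_nonneg.2 zero_le_one)
  have hp' : 0 ≤ g ^ 2 • p := smul_nonneg (by positivity) hp
  have hel : (0 : Fin n → ℝ) ≤ Pi.single l 1 := Pi.single_nonneg.2 zero_le_one
  have hbound : ∀ ε : ℝ, 0 < ε →
      dH (A *ᵥ (g ^ 2 • p + Pi.single l 1 + ε • 1)) (A *ᵥ (p + Pi.single l 1 + ε • 1)) ≤
        c * log (g ^ 2) := fun ε hε => by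
    refine (hc _ _ (add_smul_one_pos (add_nonneg hp' hel) hε)
      (add_smul_one_pos (add_nonneg hp hel) hε)).trans ?_
    rw [add_assoc, add_assoc]
    exact mul_le_mul_of_nonneg_left
      (dH_smul_add_le hp (add_smul_one_pos hel hε) (one_le_pow₀ hg.le)) hc0
  have hpair := log_sub_le_of_forall_dH_mulVec_add_le hA (add_nonneg hp' hel) (add_nonneg hp hel)
    (add_single_one_ne_zero hp' l) (add_single_one_ne_zero hp l) hbound i j
  have hAx : ∀ t, (A *ᵥ (g ^ 2 • p + Pi.single l 1)) t = g ^ 2 * σ * A t k + A t l := fun t => by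
    simp [p, mulVec_add, mulVec_smul, mul_assoc]
  have hAy : ∀ t, (A *ᵥ (p + Pi.single l 1)) t = σ * A t k + A t l := fun t => by
    simp [p, mulVec_add, mulVec_smul]
  rw [hAx, hAy, hAx, hAy, log_div_sub_log_div_eq_of_mul_eq (hA i k) (hA i l) (hA j k) (hA j l)
    hf hg0 hattain hσ, log_pow] at hpair
  push_cast at hpair
  linarith

end Sharpness

section Square

variable {D : ℕ} [NeZero D] {A : Matrix (Fin D) (Fin D) ℝ} {f : ℝ}

theorem projDiam_eq_log (hA : ∀ i j, 0 < A i j)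
    (hmax : ∀ i j k l, A i k * A j l ≤ f ^ 2 * (A j k * A i l)) {i j k l : Fin D}
    (hattain : A i k * A j l = f ^ 2 * (A j k * A i l)) :
    projDiam A = log (f ^ 2) := by
  refine IsLUB.csSup_eq ⟨?_, fun C hC => ?_⟩ ⟨_, 1, 1, fun _ => one_pos, fun _ => one_pos, rfl⟩
  · rintro _ ⟨u, v, hu, hv, rfl⟩
    have hu' : 0 ≤ u := fun t => (hu t).le
    have hv' : 0 ≤ v := fun t => (hv t).le
    have hv0 : v ≠ 0 := fun h => (hv 0).ne' (congrFun h 0)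
    obtain ⟨t, ht⟩ := Finite.exists_min fun t => (A *ᵥ u) t / (A *ᵥ v) t
    have hr := div_pos (mulVec_pos hA hu t) (mulVec_pos hA hv t)
    have := dH_le_of_bounds hr ht fun s => mulVec_div_mulVec_le hA hmax hu' hv' hv0 s t
    have hf2 : 0 < f ^ 2 := (mul_pos_iff_of_pos_right (mul_pos (hA j k) (hA i l))).1
      (hattain ▸ mul_pos (hA i k) (hA j l))
    rwa [log_mul hf2.ne' hr.ne', add_sub_cancel_right] at this
  · have hek : (0 : Fin D → ℝ) ≤ Pi.single k 1 := Pi.single_nonneg.2 zero_le_one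
    have hel : (0 : Fin D → ℝ) ≤ Pi.single l 1 := Pi.single_nonneg.2 zero_le_one
    have := log_sub_le_of_forall_dH_mulVec_add_le hA hek hel (by simp) (by simp)
      (fun ε hε => hC ⟨_, _, add_smul_one_pos hek hε, add_smul_one_pos hel hε, rfl⟩) i j
    simp only [mulVec_single_one, col_apply] at this
    rwa [← log_div (div_pos (hA i k) (hA i l)).ne' (div_pos (hA j k) (hA j l)).ne',
      div_div_div_eq, hattain, mul_comm (A i l), mul_div_assoc,
      div_self (mul_pos (hA j k) (hA i l)).ne', mul_one] at this

theorem contrRatio_eq (hA : ∀ i j, 0 < A i j) (hf : 1 ≤ f)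
    (hmax : ∀ i j k l, A i k * A j l ≤ f ^ 2 * (A j k * A i l))
    {i j k l : Fin D} (hattain : A i k * A j l = f ^ 2 * (A j k * A i l)) :
    contrRatio A = (f - 1) / (f + 1) :=
  IsLeast.csInf_eq ⟨⟨div_nonneg (by linarith) (by linarith),
    fun _ _ hx hy => dH_mulVec_le hA hf hmax hx hy⟩,
    fun _ ⟨hc0, hc⟩ => le_of_forall_dH_mulVec_le hA (by linarith) hattain hc0 hc⟩

end Square

theorem birkhoff_contraction_theorem
    (D : ℕ) (hD : 1 ≤ D) (A : Matrix (Fin D) (Fin D) ℝ)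
    (hA : ∀ i j, 0 < A i j) :
    contrRatio A = Real.tanh (projDiam A / 4) ∧
    Real.tanh (projDiam A / 4) < 1 ∧
    ∀ x y : Fin D → ℝ, (∀ i, 0 < x i) → (∀ i, 0 < y i) →
      dH (A.mulVec x) (A.mulVec y) ≤ Real.tanh (projDiam A / 4) * dH x y := by
  have : NeZero D := ⟨by omega⟩
  obtain ⟨f, hf, hmax, i, j, k, l, hattain⟩ := exists_crossRatio_bound hA
  have htanh : tanh (projDiam A / 4) = (f - 1) / (f + 1) := by
    rw [projDiam_eq_log hA hmax hattain, log_pow, ← tanh_log_div_two (by linarith)]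
    ring_nf
  rw [htanh]
  exact ⟨contrRatio_eq hA hf hmax hattain, (div_lt_one (by linarith)).2 (by linarith),
    fun x y hx hy => dH_mulVec_le hA hf hmax hx hy⟩
end

section
/- The metric space E := ({x ∈ ℝ^D : all entries of x are strictly positive and ‖x‖ = 1}, d_H) is complete: every sequence of unit-norm strictly positive vectors that is Cauchy with respect to the Hilbert metric d_H converges in the metric d_H to a unit-norm vector with all entries strictly positive. -/
/-- The Euclidean norm on `ℝ^D`. -/
noncomputable def enorm {D : ℕ} (x : Fin D → ℝ) : ℝ :=
  Real.sqrt (∑ i, x i ^ 2)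

/-!
In the log-coordinates `x ↦ (log xᵢ)ᵢ`, the Hilbert metric is the oscillation
`maxᵢ (log xᵢ - log yᵢ) - minᵢ (log xᵢ - log yᵢ)`. Two vectors of equal Euclidean norm
cannot dominate each other strictly, so this maximum is `≥ 0` and this minimum is `≤ 0`,
whence `d_H` dominates the sup distance of the log-coordinates and is itself at most twice
that distance. Hence a `d_H`-Cauchy sequence of unit vectors has log-coordinates converging in
`ℝ^D`, and the exponential of the limit is the `d_H`-limit.
-/

open Real Filter Topology

section HilbertMetric

variable {D : ℕ} [Nonempty (Fin D)] {x y : Fin D → ℝ}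

lemma exists_le_of_enorm_eq (hy : ∀ i, 0 ≤ y i) (h : _root_.enorm x = _root_.enorm y) :
    ∃ i, x i ≤ y i := by
  by_contra! hlt
  have hsum : ∑ i, y i ^ 2 < ∑ i, x i ^ 2 :=
    Finset.sum_lt_sum_of_nonempty Finset.univ_nonempty
      fun i _ => pow_lt_pow_left₀ (hlt i) (hy i) two_ne_zero
  have : _root_.enorm y < _root_.enorm x :=
    Real.sqrt_lt_sqrt (Finset.sum_nonneg fun i _ => sq_nonneg _) hsum
  exact this.ne' h

lemma ratio_le_exp_dH_mul_ratio (hx : ∀ i, 0 < x i) (hy : ∀ i, 0 < y i) (i j : Fin D) :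
    x i / y i ≤ exp (dH x y) * (x j / y j) := by
  set r : Fin D → ℝ := fun k => x k / y k
  have hr : ∀ k, 0 < r k := fun k => div_pos (hx k) (hy k)
  have hinf : 0 < ⨅ k, r k := by
    obtain ⟨k, hk⟩ := exists_eq_ciInf_of_finite (f := r)
    exact hk ▸ hr k
  have hsup : 0 < ⨆ k, r k := (hr i).trans_le (le_ciSup (Finite.bddAbove_range r) i)
  change r i ≤ exp (dH x y) * r j
  rw [dH, exp_log (div_pos hsup hinf), div_mul_eq_mul_div, le_div_iff₀ hinf]
  exact mul_le_mul (le_ciSup (Finite.bddAbove_range r) i) (ciInf_le (Finite.bddBelow_range r) j)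
    hinf.le hsup.le

lemma abs_log_sub_log_le_dH (hx : ∀ i, 0 < x i) (hy : ∀ i, 0 < y i)
    (h : _root_.enorm x = _root_.enorm y) (i : Fin D) :
    |log (x i) - log (y i)| ≤ dH x y := by
  obtain ⟨j, hj⟩ := exists_le_of_enorm_eq (fun k => (hy k).le) h
  obtain ⟨k, hk⟩ := exists_le_of_enorm_eq (fun k => (hx k).le) h.symm
  have hri : 0 < x i / y i := div_pos (hx i) (hy i)
  rw [← log_div (hx i).ne' (hy i).ne', abs_le, le_log_iff_exp_le hri, log_le_iff_le_exp hri]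
  constructor
  · calc exp (-dH x y) ≤ exp (-dH x y) * (x k / y k) :=
          le_mul_of_one_le_right (exp_pos _).le ((one_le_div (hy k)).2 hk)
      _ ≤ exp (-dH x y) * (exp (dH x y) * (x i / y i)) := by
          gcongr; exact ratio_le_exp_dH_mul_ratio hx hy k i
      _ = x i / y i := by rw [← mul_assoc, ← exp_add, neg_add_cancel, exp_zero, one_mul]
  · calc x i / y i ≤ exp (dH x y) * (x j / y j) := ratio_le_exp_dH_mul_ratio hx hy i j
      _ ≤ exp (dH x y) := mul_le_of_le_one_right (exp_pos _).le (div_le_one_of_le₀ hj (hy j).le)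

lemma dist_log_le_dH (hx : ∀ i, 0 < x i) (hy : ∀ i, 0 < y i)
    (h : _root_.enorm x = _root_.enorm y) :
    dist (log ∘ x) (log ∘ y) ≤ dH x y :=
  dist_pi_le_iff'.2 fun i => (Real.dist_eq _ _).trans_le (abs_log_sub_log_le_dH hx hy h i)

lemma dH_le_two_mul_dist_log (hx : ∀ i, 0 < x i) (hy : ∀ i, 0 < y i) :
    dH x y ≤ 2 * dist (log ∘ x) (log ∘ y) := by
  set c := dist (log ∘ x) (log ∘ y)
  set r : Fin D → ℝ := fun k => x k / y k
  have hbounds : ∀ k, exp (-c) ≤ r k ∧ r k ≤ exp c := fun k => by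
    have hk : |log (r k)| ≤ c := by
      rw [log_div (hx k).ne' (hy k).ne', ← Real.dist_eq]
      exact dist_le_pi_dist (log ∘ x) (log ∘ y) k
    have hrk : 0 < r k := div_pos (hx k) (hy k)
    rw [abs_le, le_log_iff_exp_le hrk, log_le_iff_le_exp hrk] at hk
    exact hk
  have hinf : exp (-c) ≤ ⨅ k, r k := le_ciInf fun k => (hbounds k).1
  have hsup : ⨆ k, r k ≤ exp c := ciSup_le fun k => (hbounds k).2
  have hsup_pos : 0 < ⨆ k, r k :=
    (exp_pos _).trans_le <| hinf.trans (ciInf_le_ciSup (Finite.bddBelow_range r)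
      (Finite.bddAbove_range r))
  have hinf_pos : 0 < ⨅ k, r k := (exp_pos _).trans_le hinf
  calc dH x y = log ((⨆ k, r k) / ⨅ k, r k) := rfl
    _ ≤ log (exp c / exp (-c)) := by gcongr
    _ = 2 * c := by rw [← exp_sub, log_exp]; ring

end HilbertMetric

/-- The metric space `E = (O⁺ ∩ U, d_H)` of unit-norm strictly positive vectors with the
Hilbert metric is complete. -/
theorem hilbert_metric_space_complete
    (D : ℕ) (hD : 1 ≤ D) (x : ℕ → Fin D → ℝ)
    (hpos : ∀ n i, 0 < x n i) (hnorm : ∀ n, _root_.enorm (x n) = 1)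
    (hcauchy : ∀ ε : ℝ, 0 < ε → ∃ N : ℕ, ∀ m ≥ N, ∀ n ≥ N, dH (x m) (x n) < ε) :
    ∃ y : Fin D → ℝ, (∀ i, 0 < y i) ∧ _root_.enorm y = 1 ∧
      Filter.Tendsto (fun n => dH (x n) y) Filter.atTop (nhds 0) := by
  have : Nonempty (Fin D) := ⟨⟨0, hD⟩⟩
  have hlog_cauchy : CauchySeq fun n => log ∘ x n :=
    Metric.cauchySeq_iff.2 fun ε hε => (hcauchy ε hε).imp fun _ hN m hm n hn =>
      (dist_log_le_dH (hpos m) (hpos n) ((hnorm m).trans (hnorm n).symm)).trans_lt (hN m hm n hn)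
  obtain ⟨z, hz⟩ := cauchySeq_tendsto_of_complete hlog_cauchy
  have hx_tendsto : Tendsto x atTop (𝓝 (exp ∘ z)) := by
    have hexp : Continuous fun v : Fin D → ℝ => exp ∘ v := by fun_prop
    convert (hexp.tendsto z).comp hz using 1
    ext n i
    exact (exp_log (hpos n i)).symm
  have hnorm_lim : _root_.enorm (exp ∘ z) = 1 := by
    have hcont : Continuous (_root_.enorm : (Fin D → ℝ) → ℝ) := by unfold _root_.enorm; fun_prop
    exact tendsto_nhds_unique ((hcont.tendsto _).comp hx_tendsto) (by simp [Function.comp_def, hnorm])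
  refine ⟨exp ∘ z, fun i => exp_pos _, hnorm_lim, ?_⟩
  have hlog_exp : log ∘ exp ∘ z = z := by ext i; exact log_exp _
  have hdist : Tendsto (fun n => 2 * dist (log ∘ x n) z) atTop (𝓝 0) := by
    simpa using (tendsto_iff_dist_tendsto_zero.1 hz).const_mul 2
  refine squeeze_zero (fun n => ?_) (fun n => ?_) hdist
  · exact dist_nonneg.trans
      (dist_log_le_dH (hpos n) (fun i => exp_pos _) ((hnorm n).trans hnorm_lim.symm))
  · exact (dH_le_two_mul_dist_log (y := exp ∘ z) (hpos n) fun i => exp_pos (z i)).trans_eq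
      (by rw [hlog_exp])
end

section
/- Let A be a D×D real matrix with nonnegative entries that is primitive, i.e., there exists a positive integer h such that every entry of A^h is strictly positive. Then there exists a unique unit-norm strictly positive eigenvector x_f of A such that for every nonzero vector x_0 ∈ ℝ^D with nonnegative entries, the iterates A^n·x_0 converge in direction to x_f: for all n ≥ h the vector A^n·x_0 has strictly positive entries, d_H(A^n·x_0, x_f) → 0 as n → ∞, and the convergence rate is at least linear, i.e., there exist constants K ≥ 0 and 0 ≤ r < 1 such that d_H(A^n·x_0, x_f) ≤ K·r^n for all n ≥ h. -/
/-!
For positive vectors write `hilbertRatio x y = max_i (x_i / y_i) / min_i (x_i / y_i)`, so that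
`dH = log ∘ hilbertRatio`. A nonnegative matrix never increases this ratio, and a matrix `B` with
all entries in `[b, c]`, `0 < b`, contracts `hilbertRatio - 1` by the factor `1 - (b / c) ^ 2`
(an elementary form of Birkhoff's contraction theorem). For `B = A ^ h` this makes the normalized
orbit of `B ^ n 1` a Cauchy sequence whose limit is a positive eigenvector of `B`; positive
eigenvectors of `B` are unique up to scaling, which forces this one to be an eigenvector of `A`
as well. Along the orbit of a nonnegative `x₀ ≠ 0`, `hilbertRatio (A ^ n x₀) x_f - 1` is
nonincreasing and shrinks by the contraction factor every `h` steps, hence decays geometrically.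
-/

namespace PerronFrobenius

open Filter Topology Matrix

variable {ι : Type*}

section Ratios

noncomputable def maxRatio (x y : ι → ℝ) : ℝ := ⨆ i, x i / y i

noncomputable def minRatio (x y : ι → ℝ) : ℝ := ⨅ i, x i / y i

noncomputable def hilbertRatio (x y : ι → ℝ) : ℝ := maxRatio x y / minRatio x y

theorem dH_eq_log_hilbertRatio {D : ℕ} (x y : Fin D → ℝ) :
    dH x y = Real.log (hilbertRatio x y) := rfl

variable {x y : ι → ℝ}

theorem maxRatio_le [Nonempty ι] {M : ℝ} (hy : ∀ i, 0 < y i) (h : ∀ i, x i ≤ M * y i) :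
    maxRatio x y ≤ M :=
  ciSup_le fun i => (div_le_iff₀ (hy i)).2 (h i)

theorem le_minRatio [Nonempty ι] {m : ℝ} (hy : ∀ i, 0 < y i) (h : ∀ i, m * y i ≤ x i) :
    m ≤ minRatio x y :=
  le_ciInf fun i => (le_div_iff₀ (hy i)).2 (h i)

theorem ne_zero_of_forall_pos [Nonempty ι] (hx : ∀ i, 0 < x i) : x ≠ 0 :=
  fun h => (hx (Classical.arbitrary ι)).ne' (congrFun h _)

variable [Finite ι]

theorem div_le_maxRatio (x y : ι → ℝ) (i : ι) : x i / y i ≤ maxRatio x y :=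
  le_ciSup (Finite.bddAbove_range (fun i => x i / y i)) i

theorem minRatio_le_div (x y : ι → ℝ) (i : ι) : minRatio x y ≤ x i / y i :=
  ciInf_le (Finite.bddBelow_range (fun i => x i / y i)) i

theorem le_maxRatio_mul (hy : ∀ i, 0 < y i) (i : ι) : x i ≤ maxRatio x y * y i :=
  (div_le_iff₀ (hy i)).1 (div_le_maxRatio x y i)

theorem minRatio_mul_le (hy : ∀ i, 0 < y i) (i : ι) : minRatio x y * y i ≤ x i :=
  (le_div_iff₀ (hy i)).1 (minRatio_le_div x y i)

variable [Nonempty ι]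

theorem minRatio_pos (hx : ∀ i, 0 < x i) (hy : ∀ i, 0 < y i) : 0 < minRatio x y := by
  obtain ⟨i, hi⟩ := exists_eq_ciInf_of_finite (f := fun i => x i / y i)
  rw [minRatio, ← hi]
  exact div_pos (hx i) (hy i)

theorem minRatio_le_maxRatio : minRatio x y ≤ maxRatio x y :=
  (minRatio_le_div x y (Classical.arbitrary ι)).trans (div_le_maxRatio x y _)

theorem one_le_hilbertRatio (hx : ∀ i, 0 < x i) (hy : ∀ i, 0 < y i) : 1 ≤ hilbertRatio x y :=
  (one_le_div (minRatio_pos hx hy)).2 minRatio_le_maxRatio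

theorem maxRatio_sub_minRatio_le {C : ℝ} (h : ∀ i j, x i / y i - x j / y j ≤ C) :
    maxRatio x y - minRatio x y ≤ C := by
  obtain ⟨i, hi⟩ := exists_eq_ciSup_of_finite (f := fun i => x i / y i)
  obtain ⟨j, hj⟩ := exists_eq_ciInf_of_finite (f := fun i => x i / y i)
  rw [maxRatio, minRatio, ← hi, ← hj]
  exact h i j

theorem eq_minRatio_smul_of_hilbertRatio_eq_one (hx : ∀ i, 0 < x i) (hy : ∀ i, 0 < y i)
    (h : hilbertRatio x y = 1) : x = minRatio x y • y := by
  have hmM : maxRatio x y = minRatio x y := (div_eq_one_iff_eq (minRatio_pos hx hy).ne').1 h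
  funext i
  exact le_antisymm (hmM ▸ le_maxRatio_mul hy i) (minRatio_mul_le hy i)

end Ratios

section Scaling

variable {x y : ι → ℝ} {c : ℝ}

theorem maxRatio_smul_left (hc : 0 ≤ c) : maxRatio (c • x) y = c * maxRatio x y := by
  simp only [maxRatio, Real.mul_iSup_of_nonneg hc, Pi.smul_apply, smul_eq_mul, mul_div_assoc]

theorem minRatio_smul_left (hc : 0 ≤ c) : minRatio (c • x) y = c * minRatio x y := by
  simp only [minRatio, Real.mul_iInf_of_nonneg hc, Pi.smul_apply, smul_eq_mul, mul_div_assoc]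

theorem maxRatio_smul_right (hc : 0 ≤ c) : maxRatio x (c • y) = c⁻¹ * maxRatio x y := by
  simp only [maxRatio, Real.mul_iSup_of_nonneg (inv_nonneg.2 hc), Pi.smul_apply, smul_eq_mul,
    div_mul_eq_div_div_swap, div_eq_inv_mul _ c]

theorem minRatio_smul_right (hc : 0 ≤ c) : minRatio x (c • y) = c⁻¹ * minRatio x y := by
  simp only [minRatio, Real.mul_iInf_of_nonneg (inv_nonneg.2 hc), Pi.smul_apply, smul_eq_mul,
    div_mul_eq_div_div_swap, div_eq_inv_mul _ c]

theorem hilbertRatio_smul_left (hc : 0 < c) : hilbertRatio (c • x) y = hilbertRatio x y := by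
  rw [hilbertRatio, hilbertRatio, maxRatio_smul_left hc.le, minRatio_smul_left hc.le,
    mul_div_mul_left _ _ hc.ne']

theorem hilbertRatio_smul_right (hc : 0 < c) : hilbertRatio x (c • y) = hilbertRatio x y := by
  rw [hilbertRatio, hilbertRatio, maxRatio_smul_right hc.le, minRatio_smul_right hc.le,
    mul_div_mul_left _ _ (inv_ne_zero hc.ne')]

end Scaling

variable [Fintype ι]

theorem abs_sub_le_mul_of_sum_eq [Nonempty ι] {x y : ι → ℝ} (hx : ∀ i, 0 < x i) (hy : ∀ i, 0 < y i)
    (hsum : ∑ i, x i = ∑ i, y i) (i : ι) : |x i - y i| ≤ (hilbertRatio x y - 1) * y i := by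
  have hy_sum : 0 < ∑ i, y i := Finset.sum_pos (fun i _ => hy i) Finset.univ_nonempty
  have hm : 0 < minRatio x y := minRatio_pos hx hy
  have hm1 : minRatio x y ≤ 1 := by
    refine le_of_mul_le_mul_right ?_ hy_sum
    rw [one_mul, Finset.mul_sum, ← hsum]
    exact Finset.sum_le_sum fun i _ => minRatio_mul_le hy i
  set R := hilbertRatio x y
  have hM : maxRatio x y = R * minRatio x y := (div_mul_cancel₀ _ hm.ne').symm
  have hR : 1 ≤ R * minRatio x y := by
    refine le_of_mul_le_mul_right ?_ hy_sum
    rw [one_mul, Finset.mul_sum, ← hM, ← hsum]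
    exact Finset.sum_le_sum fun i _ => le_maxRatio_mul hy i
  have hup := le_maxRatio_mul (x := x) hy i
  have hlo := minRatio_mul_le (x := x) hy i
  rw [hM] at hup
  rw [abs_sub_le_iff]
  -- The lower side also uses `1 - m ≤ R - 1`, i.e. `R ≥ 1 / m ≥ 2 - m`.
  constructor <;> nlinarith [hy i, mul_nonneg (sub_nonneg.2 hm1) (hy i).le]

section NonnegMatrix

variable {A : Matrix ι ι ℝ} {x y : ι → ℝ}

theorem mulVec_nonneg (hA : ∀ i j, 0 ≤ A i j) (hx : ∀ i, 0 ≤ x i) (i : ι) :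
    0 ≤ (A *ᵥ x) i :=
  Finset.sum_nonneg fun j _ => mul_nonneg (hA i j) (hx j)

theorem mulVec_le_mulVec (hA : ∀ i j, 0 ≤ A i j) (hxy : ∀ i, x i ≤ y i) (i : ι) :
    (A *ᵥ x) i ≤ (A *ᵥ y) i :=
  Finset.sum_le_sum fun j _ => mul_le_mul_of_nonneg_left (hxy j) (hA i j)

theorem mulVec_pos_of_exists_pos (hA : ∀ i j, 0 ≤ A i j) (hrow : ∀ i, ∃ j, 0 < A i j)
    (hx : ∀ i, 0 < x i) (i : ι) : 0 < (A *ᵥ x) i := by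
  obtain ⟨j, hj⟩ := hrow i
  exact Finset.sum_pos' (fun k _ => mul_nonneg (hA i k) (hx k).le)
    ⟨j, Finset.mem_univ j, mul_pos hj (hx j)⟩

theorem mulVec_pos (hA : ∀ i j, 0 < A i j) (hx : ∀ i, 0 ≤ x i) (hx0 : x ≠ 0) (i : ι) :
    0 < (A *ᵥ x) i := by
  obtain ⟨j, hj⟩ := Function.ne_iff.1 hx0
  exact Finset.sum_pos' (fun k _ => mul_nonneg (hA i k).le (hx k))
    ⟨j, Finset.mem_univ j, mul_pos (hA i j) ((hx j).lt_of_ne' hj)⟩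

theorem pos_of_mulVec_eq_smul [Nonempty ι] {μ : ℝ} (hx : ∀ i, 0 < x i)
    (hAx : ∀ i, 0 < (A *ᵥ x) i) (h : A *ᵥ x = μ • x) : 0 < μ := by
  have i := Classical.arbitrary ι
  have hi := hAx i
  rw [h] at hi
  exact pos_of_mul_pos_left hi (hx i).le

theorem pow_mulVec_eq_pow_smul [DecidableEq ι] {μ : ℝ} (h : A *ᵥ x = μ • x) (n : ℕ) :
    (A ^ n) *ᵥ x = μ ^ n • x := by
  induction n with
  | zero => rw [pow_zero, one_mulVec, pow_zero, one_smul]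
  | succ n ih => rw [pow_succ', ← mulVec_mulVec, ih, mulVec_smul, h, smul_smul, pow_succ]

variable [Nonempty ι]

theorem minRatio_le_minRatio_mulVec (hA : ∀ i j, 0 ≤ A i j) (hy : ∀ i, 0 < y i)
    (hAy : ∀ i, 0 < (A *ᵥ y) i) : minRatio x y ≤ minRatio (A *ᵥ x) (A *ᵥ y) :=
  le_minRatio hAy fun i => by
    simpa only [mulVec_smul, Pi.smul_apply, smul_eq_mul] using
      mulVec_le_mulVec (x := minRatio x y • y) hA (minRatio_mul_le hy) i

theorem maxRatio_mulVec_le (hA : ∀ i j, 0 ≤ A i j) (hy : ∀ i, 0 < y i)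
    (hAy : ∀ i, 0 < (A *ᵥ y) i) : maxRatio (A *ᵥ x) (A *ᵥ y) ≤ maxRatio x y :=
  maxRatio_le hAy fun i => by
    simpa only [mulVec_smul, Pi.smul_apply, smul_eq_mul] using
      mulVec_le_mulVec (y := maxRatio x y • y) hA (le_maxRatio_mul hy) i

theorem hilbertRatio_mulVec_le (hA : ∀ i j, 0 ≤ A i j) (hx : ∀ i, 0 < x i) (hy : ∀ i, 0 < y i)
    (hAy : ∀ i, 0 < (A *ᵥ y) i) : hilbertRatio (A *ᵥ x) (A *ᵥ y) ≤ hilbertRatio x y :=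
  div_le_div₀ (minRatio_pos hx hy |>.le.trans minRatio_le_maxRatio)
    (maxRatio_mulVec_le hA hy hAy) (minRatio_pos hx hy) (minRatio_le_minRatio_mulVec hA hy hAy)

end NonnegMatrix

section PositiveMatrix

variable {B : Matrix ι ι ℝ} {x u v : ι → ℝ}

noncomputable def minEntry (B : Matrix ι ι ℝ) : ℝ := ⨅ p : ι × ι, B p.1 p.2

noncomputable def maxEntry (B : Matrix ι ι ℝ) : ℝ := ⨆ p : ι × ι, B p.1 p.2

noncomputable def contractionCoeff (B : Matrix ι ι ℝ) : ℝ := 1 - (minEntry B / maxEntry B) ^ 2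

theorem minEntry_le (B : Matrix ι ι ℝ) (i j : ι) : minEntry B ≤ B i j :=
  ciInf_le (Finite.bddBelow_range fun p : ι × ι => B p.1 p.2) (i, j)

theorem le_maxEntry (B : Matrix ι ι ℝ) (i j : ι) : B i j ≤ maxEntry B :=
  le_ciSup (Finite.bddAbove_range fun p : ι × ι => B p.1 p.2) (i, j)

theorem minEntry_mul_sum_le_mulVec (hx : ∀ i, 0 ≤ x i) (i : ι) :
    minEntry B * ∑ j, x j ≤ (B *ᵥ x) i := by
  rw [Finset.mul_sum]
  exact Finset.sum_le_sum fun j _ => mul_le_mul_of_nonneg_right (minEntry_le B i j) (hx j)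

theorem mulVec_le_maxEntry_mul_sum (hx : ∀ i, 0 ≤ x i) (i : ι) :
    (B *ᵥ x) i ≤ maxEntry B * ∑ j, x j := by
  rw [Finset.mul_sum]
  exact Finset.sum_le_sum fun j _ => mul_le_mul_of_nonneg_right (le_maxEntry B i j) (hx j)

variable [Nonempty ι]

theorem minEntry_pos (hB : ∀ i j, 0 < B i j) : 0 < minEntry B := by
  obtain ⟨p, hp⟩ := exists_eq_ciInf_of_finite (f := fun p : ι × ι => B p.1 p.2)
  rw [minEntry, ← hp]
  exact hB p.1 p.2

theorem minEntry_le_maxEntry (B : Matrix ι ι ℝ) : minEntry B ≤ maxEntry B :=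
  (minEntry_le B _ _).trans (le_maxEntry B (Classical.arbitrary ι) (Classical.arbitrary ι))

theorem contractionCoeff_nonneg (hB : ∀ i j, 0 < B i j) : 0 ≤ contractionCoeff B := by
  have hb := minEntry_pos hB
  have hc := hb.trans_le (minEntry_le_maxEntry B)
  rw [contractionCoeff, sub_nonneg]
  exact pow_le_one₀ (div_pos hb hc).le ((div_le_one hc).2 (minEntry_le_maxEntry B))

theorem contractionCoeff_lt_one (hB : ∀ i j, 0 < B i j) : contractionCoeff B < 1 := by
  have hb := minEntry_pos hB
  have hc := hb.trans_le (minEntry_le_maxEntry B)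
  rw [contractionCoeff, sub_lt_self_iff]
  exact pow_pos (div_pos hb hc) 2

theorem minEntry_mul_mulVec_le (hB : ∀ i j, 0 < B i j) (hx : ∀ i, 0 ≤ x i) (i j : ι) :
    minEntry B * (B *ᵥ x) j ≤ maxEntry B * (B *ᵥ x) i := by
  have hb := minEntry_pos hB
  calc minEntry B * (B *ᵥ x) j ≤ minEntry B * (maxEntry B * ∑ k, x k) :=
        mul_le_mul_of_nonneg_left (mulVec_le_maxEntry_mul_sum hx j) hb.le
    _ = maxEntry B * (minEntry B * ∑ k, x k) := mul_left_comm _ _ _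
    _ ≤ maxEntry B * (B *ᵥ x) i :=
        mul_le_mul_of_nonneg_left (minEntry_mul_sum_le_mulVec hx i)
          (hb.le.trans (minEntry_le_maxEntry B))

theorem sq_div_mul_mulVec_div_le (hB : ∀ i j, 0 < B i j) (hx : ∀ i, 0 ≤ x i)
    (hv : ∀ i, 0 < v i) (i j : ι) :
    (minEntry B / maxEntry B) ^ 2 * ((B *ᵥ x) j / (B *ᵥ v) j) ≤ (B *ᵥ x) i / (B *ᵥ v) i := by
  have hb := minEntry_pos hB
  have hc := hb.trans_le (minEntry_le_maxEntry B)
  have hBv := mulVec_pos hB (fun i => (hv i).le) (ne_zero_of_forall_pos hv)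
  have hxji := minEntry_mul_mulVec_le hB hx i j
  have hvij := minEntry_mul_mulVec_le hB (fun i => (hv i).le) j i
  rw [div_pow, div_mul_div_comm, div_le_div_iff₀ (mul_pos (pow_pos hc 2) (hBv j)) (hBv i)]
  nlinarith [mul_le_mul hxji hvij (mul_pos hb (hBv i)).le (mul_nonneg hc.le (mulVec_nonneg
    (fun i j => (hB i j).le) hx i))]

theorem hilbertRatio_mulVec_sub_one_le (hB : ∀ i j, 0 < B i j) (hu : ∀ i, 0 < u i)
    (hv : ∀ i, 0 < v i) :
    hilbertRatio (B *ᵥ u) (B *ᵥ v) - 1 ≤ contractionCoeff B * (hilbertRatio u v - 1) := by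
  set k := (minEntry B / maxEntry B) ^ 2
  set m := minRatio u v
  set M := maxRatio u v
  set m' := minRatio (B *ᵥ u) (B *ᵥ v)
  have hBv := mulVec_pos hB (fun i => (hv i).le) (ne_zero_of_forall_pos hv)
  have hm : 0 < m := minRatio_pos hu hv
  have hmm' : m ≤ m' := minRatio_le_minRatio_mulVec (fun i j => (hB i j).le) hv hBv
  have hk : 0 ≤ 1 - k := contractionCoeff_nonneg hB
  -- With `q = M • v - u ≥ 0`, the gap `M - (B u)_i / (B v)_i` is `(B q)_i / (B v)_i`, and such
  -- quotients differ by at most the factor `k` between coordinates.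
  have hgap : ∀ i, (B *ᵥ (M • v - u)) i / (B *ᵥ v) i = M - (B *ᵥ u) i / (B *ᵥ v) i := by
    intro i
    rw [mulVec_sub, mulVec_smul, Pi.sub_apply, Pi.smul_apply, smul_eq_mul, sub_div,
      mul_div_assoc, div_self (hBv i).ne', mul_one]
  have hspread : ∀ i j, (B *ᵥ u) i / (B *ᵥ v) i - (B *ᵥ u) j / (B *ᵥ v) j ≤ (1 - k) * (M - m) := by
    intro i j
    have hq := sq_div_mul_mulVec_div_le hB (x := M • v - u)
      (fun l => sub_nonneg.2 (le_maxRatio_mul hv l)) hv i j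
    rw [hgap, hgap] at hq
    have hj : m ≤ (B *ᵥ u) j / (B *ᵥ v) j := hmm'.trans (minRatio_le_div _ _ j)
    nlinarith [mul_nonneg hk (sub_nonneg.2 hj)]
  have hm' : 0 < m' := hm.trans_le hmm'
  rw [hilbertRatio, hilbertRatio, div_sub_one hm'.ne', div_sub_one hm.ne', contractionCoeff,
    mul_div_assoc']
  calc (maxRatio (B *ᵥ u) (B *ᵥ v) - m') / m' ≤ (1 - k) * (M - m) / m' :=
        div_le_div_of_nonneg_right (maxRatio_sub_minRatio_le hspread) hm'.le
    _ ≤ (1 - k) * (M - m) / m :=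
        div_le_div_of_nonneg_left (mul_nonneg hk (sub_nonneg.2 minRatio_le_maxRatio)) hm hmm'

theorem exists_eq_smul_of_mulVec_eq_smul (hB : ∀ i j, 0 < B i j) (hu : ∀ i, 0 < u i)
    (hv : ∀ i, 0 < v i) {μ ν : ℝ} (hBu : B *ᵥ u = μ • u) (hBv : B *ᵥ v = ν • v) :
    ∃ κ : ℝ, 0 < κ ∧ u = κ • v := by
  have hμ := pos_of_mulVec_eq_smul hu (mulVec_pos hB (fun i => (hu i).le)
    (ne_zero_of_forall_pos hu)) hBu
  have hν := pos_of_mulVec_eq_smul hv (mulVec_pos hB (fun i => (hv i).le)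
    (ne_zero_of_forall_pos hv)) hBv
  have h := hilbertRatio_mulVec_sub_one_le hB hu hv
  rw [hBu, hBv, hilbertRatio_smul_left hμ, hilbertRatio_smul_right hν] at h
  have h1 : hilbertRatio u v = 1 := by
    nlinarith [one_le_hilbertRatio hu hv, contractionCoeff_lt_one hB]
  exact ⟨minRatio u v, minRatio_pos hu hv, eq_minRatio_smul_of_hilbertRatio_eq_one hu hv h1⟩

end PositiveMatrix

section Existence

variable {x y : ι → ℝ}

noncomputable def sumNormalize (x : ι → ℝ) : ι → ℝ := (∑ i, x i)⁻¹ • x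

theorem sum_sumNormalize (hx : ∑ i, x i ≠ 0) : ∑ i, sumNormalize x i = 1 := by
  simp only [sumNormalize, Pi.smul_apply, smul_eq_mul, ← Finset.mul_sum, inv_mul_cancel₀ hx]

theorem sumNormalize_smul {c : ℝ} (hc : c ≠ 0) (x : ι → ℝ) :
    sumNormalize (c • x) = sumNormalize x := by
  simp only [sumNormalize, Pi.smul_apply, smul_eq_mul, ← Finset.mul_sum, smul_smul]
  rw [mul_inv, mul_right_comm, inv_mul_cancel₀ hc, one_mul]

theorem continuousAt_sumNormalize (hx : ∑ i, x i ≠ 0) : ContinuousAt sumNormalize x :=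
  ((continuous_finsetSum _ fun i _ => continuous_apply i).continuousAt.inv₀ hx).smul
    continuousAt_id

variable [Nonempty ι]

theorem sumNormalize_pos (hx : ∀ i, 0 < x i) (i : ι) : 0 < sumNormalize x i :=
  mul_pos (inv_pos.2 (Finset.sum_pos (fun j _ => hx j) Finset.univ_nonempty)) (hx i)

theorem hilbertRatio_sumNormalize (hx : ∀ i, 0 < x i) (hy : ∀ i, 0 < y i) :
    hilbertRatio (sumNormalize x) (sumNormalize y) = hilbertRatio x y := by
  rw [sumNormalize, sumNormalize,
    hilbertRatio_smul_left (inv_pos.2 (Finset.sum_pos (fun j _ => hx j) Finset.univ_nonempty)),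
    hilbertRatio_smul_right (inv_pos.2 (Finset.sum_pos (fun j _ => hy j) Finset.univ_nonempty))]

theorem cauchySeq_sumNormalize_of_hilbertRatio_le_geometric {z : ℕ → ι → ℝ} {C θ : ℝ}
    (hθ : θ < 1) (hz : ∀ n i, 0 < z n i)
    (h : ∀ n, hilbertRatio (z (n + 1)) (z n) - 1 ≤ C * θ ^ n) :
    CauchySeq fun n => sumNormalize (z n) := by
  refine cauchySeq_of_le_geometric θ C hθ fun n => ?_
  set w := fun n => sumNormalize (z n)
  have hw : ∀ n, ∀ i, 0 < w n i := fun n => sumNormalize_pos (hz n)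
  have hw_sum : ∀ n, ∑ i, w n i = 1 := fun n =>
    sum_sumNormalize (Finset.sum_pos (fun j _ => hz n j) Finset.univ_nonempty).ne'
  have hR : 1 ≤ hilbertRatio (w (n + 1)) (w n) := one_le_hilbertRatio (hw _) (hw _)
  have hRz : hilbertRatio (w (n + 1)) (w n) - 1 ≤ C * θ ^ n :=
    (hilbertRatio_sumNormalize (hz _) (hz _)).symm ▸ h n
  refine (dist_pi_le_iff ((sub_nonneg.2 hR).trans hRz)).2 fun i => ?_
  have hle : w n i ≤ 1 :=
    hw_sum n ▸ Finset.single_le_sum (fun j _ => (hw n j).le) (Finset.mem_univ i)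
  rw [Real.dist_eq, abs_sub_comm]
  calc |w (n + 1) i - w n i| ≤ (hilbertRatio (w (n + 1)) (w n) - 1) * w n i :=
        abs_sub_le_mul_of_sum_eq (hw _) (hw _) ((hw_sum _).trans (hw_sum _).symm) i
    _ ≤ hilbertRatio (w (n + 1)) (w n) - 1 := mul_le_of_le_one_right (sub_nonneg.2 hR) hle
    _ ≤ C * θ ^ n := hRz

variable [DecidableEq ι] {B : Matrix ι ι ℝ} {v : ι → ℝ}

theorem pow_mulVec_pos (hB : ∀ i j, 0 < B i j) (hv : ∀ i, 0 < v i) (n : ℕ) (i : ι) :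
    0 < ((B ^ n) *ᵥ v) i := by
  induction n generalizing i with
  | zero => simpa using hv i
  | succ n ih =>
    rw [pow_succ', ← mulVec_mulVec]
    exact mulVec_pos hB (fun i => (ih i).le) (ne_zero_of_forall_pos ih) i

theorem exists_tendsto_sumNormalize_pow_mulVec (hB : ∀ i j, 0 < B i j) (hv : ∀ i, 0 < v i) :
    ∃ x, Tendsto (fun n => sumNormalize ((B ^ n) *ᵥ v)) atTop (𝓝 x) := by
  have hgeom : ∀ n, hilbertRatio ((B ^ (n + 1)) *ᵥ v) ((B ^ n) *ᵥ v) - 1 ≤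
      (hilbertRatio (B *ᵥ v) v - 1) * contractionCoeff B ^ n := by
    intro n
    induction n with
    | zero => simp
    | succ n ih =>
      have hstep := hilbertRatio_mulVec_sub_one_le hB (pow_mulVec_pos hB hv (n + 1))
        (pow_mulVec_pos hB hv n)
      rw [mulVec_mulVec, mulVec_mulVec, ← pow_succ', ← pow_succ'] at hstep
      calc _ ≤ _ := hstep
        _ ≤ contractionCoeff B * ((hilbertRatio (B *ᵥ v) v - 1) * contractionCoeff B ^ n) :=
            mul_le_mul_of_nonneg_left ih (contractionCoeff_nonneg hB)
        _ = (hilbertRatio (B *ᵥ v) v - 1) * contractionCoeff B ^ (n + 1) := by ring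
  exact cauchySeq_tendsto_of_complete
    (cauchySeq_sumNormalize_of_hilbertRatio_le_geometric (contractionCoeff_lt_one hB)
      (pow_mulVec_pos hB hv) hgeom)

theorem pos_eigenvector_of_tendsto_sumNormalize (hB : ∀ i j, 0 < B i j) (hv : ∀ i, 0 < v i)
    (hx : Tendsto (fun n => sumNormalize ((B ^ n) *ᵥ v)) atTop (𝓝 x)) :
    (∀ i, 0 < x i) ∧ ∃ μ : ℝ, B *ᵥ x = μ • x := by
  set w := fun n => sumNormalize ((B ^ n) *ᵥ v)
  have hz_sum : ∀ n, 0 < ∑ i, ((B ^ n) *ᵥ v) i := fun n =>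
    Finset.sum_pos (fun i _ => pow_mulVec_pos hB hv n i) Finset.univ_nonempty
  have hw_succ : ∀ n, w (n + 1) = sumNormalize (B *ᵥ w n) := fun n => by
    simp only [w, sumNormalize, mulVec_smul, pow_succ', ← mulVec_mulVec]
    rw [← sumNormalize, ← sumNormalize, sumNormalize_smul (inv_ne_zero (hz_sum n).ne')]
  have hx_nonneg : ∀ i, 0 ≤ x i := fun i =>
    ge_of_tendsto (tendsto_pi_nhds.1 hx i)
      (Eventually.of_forall fun n => (sumNormalize_pos (pow_mulVec_pos hB hv n) i).le)
  have hx_sum : ∑ i, x i = 1 := by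
    refine tendsto_nhds_unique (tendsto_finsetSum _ fun i _ => tendsto_pi_nhds.1 hx i) ?_
    simp [w, sum_sumNormalize (hz_sum _).ne']
  have hBx := mulVec_pos hB hx_nonneg fun h => by simp [h] at hx_sum
  have hBx_sum : 0 < ∑ i, (B *ᵥ x) i := Finset.sum_pos (fun i _ => hBx i) Finset.univ_nonempty
  have hfix : sumNormalize (B *ᵥ x) = x := by
    refine tendsto_nhds_unique ?_ ((tendsto_add_atTop_iff_nat 1).2 hx)
    simp only [hw_succ]
    exact (continuousAt_sumNormalize hBx_sum.ne').tendsto.comp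
      ((continuous_const.matrix_mulVec continuous_id).tendsto x |>.comp hx)
  refine ⟨fun i => hfix ▸ sumNormalize_pos hBx i, ∑ i, (B *ᵥ x) i, ?_⟩
  calc B *ᵥ x = (∑ i, (B *ᵥ x) i) • sumNormalize (B *ᵥ x) := by
        rw [sumNormalize, smul_smul, mul_inv_cancel₀ hBx_sum.ne', one_smul]
    _ = (∑ i, (B *ᵥ x) i) • x := by rw [hfix]

theorem exists_pos_eigenvector_of_pos (hB : ∀ i j, 0 < B i j) :
    ∃ x : ι → ℝ, (∀ i, 0 < x i) ∧ ∃ μ : ℝ, B *ᵥ x = μ • x := by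
  have h1 : ∀ i, (0 : ℝ) < (1 : ι → ℝ) i := fun _ => one_pos
  obtain ⟨x, hx⟩ := exists_tendsto_sumNormalize_pow_mulVec hB h1
  exact ⟨x, pos_eigenvector_of_tendsto_sumNormalize hB h1 hx⟩

end Existence

theorem exists_le_mul_pow_of_le_mul_shift {f : ℕ → ℝ} {N p : ℕ} {θ : ℝ} (hp : 0 < p) (hθ : θ < 1)
    (hf : ∀ n, N ≤ n → 0 ≤ f n) (hmono : ∀ n, N ≤ n → f (n + 1) ≤ f n)
    (hstep : ∀ n, N ≤ n → f (n + p) ≤ θ * f n) :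
    ∃ K r : ℝ, 0 ≤ K ∧ 0 ≤ r ∧ r < 1 ∧ ∀ n, N ≤ n → f n ≤ K * r ^ n := by
  -- Enlarging `θ` to a positive `θ'` makes its `p`-th root `r` a valid rate.
  obtain ⟨θ', hθ'0, hθ'1, hθθ'⟩ : ∃ θ', 0 < θ' ∧ θ' < 1 ∧ θ ≤ θ' :=
    ⟨max θ (1 / 2), lt_max_of_lt_right one_half_pos, max_lt hθ one_half_lt_one, le_max_left _ _⟩
  set r := θ' ^ ((p : ℝ)⁻¹)
  have hr0 : 0 < r := Real.rpow_pos_of_pos hθ'0 _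
  have hr1 : r < 1 := Real.rpow_lt_one hθ'0.le hθ'1 (by positivity)
  have hrp : r ^ p = θ' := Real.rpow_inv_natCast_pow hθ'0.le hp.ne'
  have hfN : ∀ k, f (N + k) ≤ f N := by
    intro k
    induction k with
    | zero => rfl
    | succ k ih => exact (hmono (N + k) (by omega)).trans ih
  have hgeom : ∀ q k, f (N + k + p * q) ≤ θ' ^ q * f N := by
    intro q k
    induction q with
    | zero => simpa using hfN k
    | succ q ih =>
      calc f (N + k + p * (q + 1)) = f (N + k + p * q + p) := by ring_nf
        _ ≤ θ * f (N + k + p * q) := hstep _ (by omega)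
        _ ≤ θ' * f (N + k + p * q) := mul_le_mul_of_nonneg_right hθθ' (hf _ (by omega))
        _ ≤ θ' * (θ' ^ q * f N) := mul_le_mul_of_nonneg_left ih hθ'0.le
        _ = θ' ^ (q + 1) * f N := by ring
  have hK : 0 ≤ f N / r ^ (N + p) := div_nonneg (hf N le_rfl) (by positivity)
  refine ⟨f N / r ^ (N + p), r, hK, hr0.le, hr1, fun n hn => ?_⟩
  obtain ⟨q, k, hk, rfl⟩ : ∃ q k, k < p ∧ n = N + k + p * q :=
    ⟨(n - N) / p, (n - N) % p, Nat.mod_lt _ hp, by have := Nat.div_add_mod (n - N) p; omega⟩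
  calc f (N + k + p * q) ≤ θ' ^ q * f N := hgeom q k
    _ = f N / r ^ (N + p) * r ^ (N + p + p * q) := by
        rw [pow_add r (N + p), pow_mul, hrp]
        field_simp
    _ ≤ f N / r ^ (N + p) * r ^ (N + k + p * q) :=
        mul_le_mul_of_nonneg_left (pow_le_pow_of_le_one hr0.le hr1.le (by omega)) hK

theorem enorm_smul_of_nonneg {D : ℕ} {c : ℝ} (hc : 0 ≤ c) (x : Fin D → ℝ) :
    _root_.enorm (c • x) = c * _root_.enorm x := by
  simp only [_root_.enorm, Pi.smul_apply, smul_eq_mul, mul_pow, ← Finset.mul_sum,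
    Real.sqrt_mul (sq_nonneg c), Real.sqrt_sq hc]

theorem enorm_pos {D : ℕ} [NeZero D] {x : Fin D → ℝ} (hx : ∀ i, 0 < x i) : 0 < _root_.enorm x :=
  Real.sqrt_pos.2 (Finset.sum_pos (fun i _ => pow_pos (hx i) 2) Finset.univ_nonempty)

section Primitive

variable [DecidableEq ι] {A : Matrix ι ι ℝ} {h : ℕ}

theorem exists_pos_of_pow_pos (hA : ∀ i j, 0 ≤ A i j) (hh : 0 < h)
    (hprim : ∀ i j, 0 < (A ^ h) i j) (i : ι) : ∃ j, 0 < A i j := by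
  by_contra! hrow
  have hzero : ∀ j, A i j = 0 := fun j => le_antisymm (hrow j) (hA i j)
  obtain ⟨k, rfl⟩ := Nat.exists_eq_add_of_lt hh
  simpa [pow_succ', Matrix.mul_apply, hzero] using hprim i i

theorem pow_pos_of_le (hA : ∀ i j, 0 ≤ A i j) (hh : 0 < h) (hprim : ∀ i j, 0 < (A ^ h) i j)
    {n : ℕ} (hn : h ≤ n) (i j : ι) : 0 < (A ^ n) i j := by
  induction n, hn using Nat.le_induction generalizing i with
  | base => exact hprim i j
  | succ n _ ih =>
    rw [pow_succ', Matrix.mul_apply]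
    exact mulVec_pos_of_exists_pos hA (exists_pos_of_pow_pos hA hh hprim) ih i

theorem pow_mulVec_pos_of_le (hA : ∀ i j, 0 ≤ A i j) (hh : 0 < h)
    (hprim : ∀ i j, 0 < (A ^ h) i j) {x : ι → ℝ} (hx : ∀ i, 0 ≤ x i) (hx0 : x ≠ 0) {n : ℕ}
    (hn : h ≤ n) (i : ι) : 0 < ((A ^ n) *ᵥ x) i :=
  mulVec_pos (pow_pos_of_le hA hh hprim hn) hx hx0 i

variable [Nonempty ι]

theorem exists_eq_smul_of_pow_pos (hprim : ∀ i j, 0 < (A ^ h) i j) {x y : ι → ℝ}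
    (hx : ∀ i, 0 < x i) (hy : ∀ i, 0 < y i) {μ ν : ℝ} (hAx : A *ᵥ x = μ • x)
    (hAy : A *ᵥ y = ν • y) : ∃ κ : ℝ, 0 < κ ∧ x = κ • y :=
  exists_eq_smul_of_mulVec_eq_smul hprim hx hy (pow_mulVec_eq_pow_smul hAx h)
    (pow_mulVec_eq_pow_smul hAy h)

theorem exists_pos_eigenvector_of_pow_pos (hA : ∀ i j, 0 ≤ A i j) (hh : 0 < h)
    (hprim : ∀ i j, 0 < (A ^ h) i j) :
    ∃ x : ι → ℝ, (∀ i, 0 < x i) ∧ ∃ lam : ℝ, 0 < lam ∧ A *ᵥ x = lam • x := by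
  obtain ⟨x, hx, μ, hBx⟩ := exists_pos_eigenvector_of_pos hprim
  have hAx := mulVec_pos_of_exists_pos hA (exists_pos_of_pow_pos hA hh hprim) hx
  have hBAx : (A ^ h) *ᵥ (A *ᵥ x) = μ • (A *ᵥ x) := by
    rw [mulVec_mulVec, ← pow_succ, pow_succ', ← mulVec_mulVec, hBx, mulVec_smul]
  obtain ⟨lam, hlam, hAx_eq⟩ := exists_eq_smul_of_mulVec_eq_smul hprim hAx hx hBAx hBx
  exact ⟨x, hx, lam, hlam, hAx_eq⟩

theorem exists_hilbertRatio_pow_mulVec_sub_one_le (hA : ∀ i j, 0 ≤ A i j) (hh : 0 < h)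
    (hprim : ∀ i j, 0 < (A ^ h) i j) {x y : ι → ℝ} {lam : ℝ} (hx : ∀ i, 0 ≤ x i) (hx0 : x ≠ 0)
    (hy : ∀ i, 0 < y i) (hlam : 0 < lam) (hAy : A *ᵥ y = lam • y) :
    ∃ K r : ℝ, 0 ≤ K ∧ 0 ≤ r ∧ r < 1 ∧
      ∀ n, h ≤ n → hilbertRatio ((A ^ n) *ᵥ x) y - 1 ≤ K * r ^ n := by
  have hpos := fun n (hn : h ≤ n) => pow_mulVec_pos_of_le hA hh hprim hx hx0 hn
  refine exists_le_mul_pow_of_le_mul_shift hh (contractionCoeff_lt_one hprim)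
    (fun n hn => sub_nonneg.2 (one_le_hilbertRatio (hpos n hn) hy)) (fun n hn => ?_)
    (fun n hn => ?_)
  · have hle := hilbertRatio_mulVec_le hA (hpos n hn) hy
      (mulVec_pos_of_exists_pos hA (exists_pos_of_pow_pos hA hh hprim) hy)
    rw [hAy, hilbertRatio_smul_right hlam, mulVec_mulVec, ← pow_succ'] at hle
    linarith
  · have hle := hilbertRatio_mulVec_sub_one_le hprim (hpos n hn) hy
    rwa [pow_mulVec_eq_pow_smul hAy, hilbertRatio_smul_right (pow_pos hlam h), mulVec_mulVec,
      ← pow_add, add_comm] at hle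

end Primitive

end PerronFrobenius

open PerronFrobenius Matrix Filter

/-- For a primitive nonnegative matrix `A`, the iterates `A^n x₀` of any nonzero
nonnegative vector converge in direction (in the Hilbert metric) to the unique
unit-norm strictly positive eigenvector of `A`, at a rate that is at least linear. -/
theorem primitive_power_iteration_converges
    (D : ℕ) (hD : 1 ≤ D) (A : Matrix (Fin D) (Fin D) ℝ)
    (hA : ∀ i j, 0 ≤ A i j)
    (h : ℕ) (hh : 0 < h) (hprim : ∀ i j, 0 < (A ^ h) i j) :
    ∃! xf : Fin D → ℝ,
      ((∀ i, 0 < xf i) ∧ _root_.enorm xf = 1 ∧ ∃ lam : ℝ, 0 < lam ∧ A.mulVec xf = lam • xf) ∧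
      ∀ x0 : Fin D → ℝ, x0 ≠ 0 → (∀ i, 0 ≤ x0 i) →
        (∀ n, h ≤ n → ∀ i, 0 < (A ^ n).mulVec x0 i) ∧
        Filter.Tendsto (fun n => dH ((A ^ n).mulVec x0) xf) Filter.atTop (nhds 0) ∧
        ∃ K r : ℝ, 0 ≤ K ∧ 0 ≤ r ∧ r < 1 ∧
          ∀ n, h ≤ n → dH ((A ^ n).mulVec x0) xf ≤ K * r ^ n := by
  have : NeZero D := ⟨by omega⟩
  obtain ⟨x, hx, lam, hlam, hAx⟩ := exists_pos_eigenvector_of_pow_pos hA hh hprim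
  have hx_norm := enorm_pos hx
  set xf := (_root_.enorm x)⁻¹ • x
  have hxf : ∀ i, 0 < xf i := fun i => mul_pos (inv_pos.2 hx_norm) (hx i)
  have hxf_norm : _root_.enorm xf = 1 := by
    rw [enorm_smul_of_nonneg (inv_pos.2 hx_norm).le, inv_mul_cancel₀ hx_norm.ne']
  have hAxf : A *ᵥ xf = lam • xf := by rw [mulVec_smul, hAx, smul_comm]
  refine ⟨xf, ⟨⟨hxf, hxf_norm, lam, hlam, hAxf⟩, fun x0 hx0 hx0_nonneg => ?_⟩, ?_⟩
  · have hpos := fun n (hn : h ≤ n) => pow_mulVec_pos_of_le hA hh hprim hx0_nonneg hx0 hn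
    obtain ⟨K, r, hK, hr0, hr1, hrate⟩ :=
      exists_hilbertRatio_pow_mulVec_sub_one_le hA hh hprim hx0_nonneg hx0 hxf hlam hAxf
    have hR : ∀ n, h ≤ n → 1 ≤ hilbertRatio ((A ^ n) *ᵥ x0) xf := fun n hn =>
      one_le_hilbertRatio (hpos n hn) hxf
    have hdH : ∀ n, h ≤ n → dH ((A ^ n) *ᵥ x0) xf ≤ K * r ^ n := fun n hn => by
      rw [dH_eq_log_hilbertRatio]
      exact (Real.log_le_sub_one_of_pos (zero_lt_one.trans_le (hR n hn))).trans (hrate n hn)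
    refine ⟨hpos, squeeze_zero' (g := fun n => K * r ^ n) ?_ ?_ ?_, K, r, hK, hr0, hr1, hdH⟩
    · filter_upwards [eventually_ge_atTop h] with n hn
      rw [dH_eq_log_hilbertRatio]
      exact Real.log_nonneg (hR n hn)
    · filter_upwards [eventually_ge_atTop h] with n hn using hdH n hn
    · simpa using (tendsto_pow_atTop_nhds_zero_of_lt_one hr0 hr1).const_mul K
  · rintro y ⟨⟨hy, hy_norm, mu, -, hAy⟩, -⟩
    obtain ⟨κ, hκ, rfl⟩ := exists_eq_smul_of_pow_pos hprim hy hxf hAy hAxf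
    rw [enorm_smul_of_nonneg hκ.le, hxf_norm, mul_one] at hy_norm
    rw [hy_norm, one_smul]
end

section
/- Let C be a D×D real matrix with nonnegative entries. Then the spectral radius of C is strictly less than 1 if and only if all leading principal minors of the matrix I − C are strictly positive, i.e., for every k with 1 ≤ k ≤ D, the determinant of the top-left k×k submatrix of I − C is strictly positive. -/
/-!
For a nonnegative matrix `C`, Gelfand's formula turns `ρ(C) < 1` into `C ^ k → 0`, so no vector
`y ≥ 0, y ≠ 0` satisfies `y ≤ C y`. Hence every principal submatrix `C'` of `C` has `ρ(C') < 1`: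
padding `|v|` by zeros, for an eigenvector `v` of `C'` with eigenvalue `|μ| ≥ 1`, would give such
a `y`. A real matrix `M` with `ρ(M) < 1` has `det (1 - t M) ≠ 0` for `t ∈ [0, 1]`, hence
`det (1 - M) > 0` by continuity from `t = 0`.

Conversely (Hawkins–Simon), eliminating the first unknown of `(1 - C) x > 0` replaces `1 - C` by
the Schur complement of its pivot `1 - C 0 0 > 0`, which is again of the form `1 - C'` with
`C' ≥ 0` and has positive leading principal minors. By induction there is `x > 0` with
`C x < x`, and comparing an eigenvector with `x` in the weighted sup norm gives `ρ(C) < 1`.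
-/

open Matrix Filter Topology Polynomial Set Function

/-- The spectral radius of a real square matrix is `< 1` iff every complex eigenvalue
(element of the spectrum of the matrix viewed over `ℂ`) has absolute value `< 1`. -/
def SpectralRadiusLtOne {D : ℕ} (C : Matrix (Fin D) (Fin D) ℝ) : Prop :=
  ∀ mu ∈ spectrum ℂ (C.map (algebraMap ℝ ℂ)), ‖mu‖ < 1

namespace Matrix

variable {ι : Type*} [Fintype ι]

lemma exists_mulVec_eq_smul_of_mem_spectrum [DecidableEq ι] {K : Type*} [Field K]
    {A : Matrix ι ι K} {μ : K} (h : μ ∈ spectrum K A) : ∃ v ≠ 0, A *ᵥ v = μ • v := by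
  rw [spectrum.mem_iff, isUnit_iff_isUnit_det, isUnit_iff_ne_zero, not_not,
    ← exists_mulVec_eq_zero_iff] at h
  obtain ⟨v, hv, hAv⟩ := h
  refine ⟨v, hv, ?_⟩
  rw [sub_mulVec, Algebra.algebraMap_eq_smul_one, smul_mulVec, one_mulVec, sub_eq_zero] at hAv
  exact hAv.symm

variable {C : Matrix ι ι ℝ}

lemma mulVec_mono_of_nonneg (hC : ∀ i j, 0 ≤ C i j) {u v : ι → ℝ} (h : u ≤ v) :
    C *ᵥ u ≤ C *ᵥ v :=
  fun i ↦ dotProduct_le_dotProduct_of_nonneg_left h (hC i)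

lemma nonpos_of_le_mulVec [DecidableEq ι] (hC : ∀ i j, 0 ≤ C i j)
    (hpow : Tendsto (C ^ ·) atTop (𝓝 0)) {y : ι → ℝ} (hy : y ≤ C *ᵥ y) : y ≤ 0 := by
  have hle : ∀ n : ℕ, y ≤ C ^ n *ᵥ y := by
    intro n
    induction n with
    | zero => simp
    | succ n ih =>
      calc y ≤ C *ᵥ y := hy
        _ ≤ C *ᵥ (C ^ n *ᵥ y) := mulVec_mono_of_nonneg hC ih
        _ = C ^ (n + 1) *ᵥ y := by rw [mulVec_mulVec, pow_succ']
  have hlim : Tendsto (fun n ↦ C ^ n *ᵥ y) atTop (𝓝 (0 *ᵥ y)) :=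
    ((continuous_id.matrix_mulVec continuous_const).tendsto 0).comp hpow
  rw [zero_mulVec] at hlim
  exact ge_of_tendsto' hlim hle

lemma norm_mul_norm_le_mulVec_norm (hC : ∀ i j, 0 ≤ C i j) {μ : ℂ} {v : ι → ℂ}
    (hv : C.map (algebraMap ℝ ℂ) *ᵥ v = μ • v) (i : ι) :
    ‖μ‖ * ‖v i‖ ≤ (C *ᵥ fun j ↦ ‖v j‖) i := by
  calc ‖μ‖ * ‖v i‖ = ‖∑ j, (C i j : ℂ) * v j‖ := by
        rw [← norm_mul, ← smul_eq_mul, ← Pi.smul_apply, ← hv]; rfl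
    _ ≤ ∑ j, ‖(C i j : ℂ) * v j‖ := norm_sum_le _ _
    _ = (C *ᵥ fun j ↦ ‖v j‖) i := by
        simp [mulVec, dotProduct, Complex.norm_real, abs_of_nonneg (hC _ _)]

end Matrix

namespace SpectralRadiusLtOne

variable {n : ℕ} {C : Matrix (Fin n) (Fin n) ℝ}

lemma spectralRadius_lt_one (h : SpectralRadiusLtOne C) :
    spectralRadius ℂ (C.map (algebraMap ℝ ℂ)) < 1 := by
  have hfin := finite_spectrum (C.map (algebraMap ℝ ℂ))
  set r := hfin.toFinset.sup (‖·‖₊)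
  have hr : r < 1 :=
    (Finset.sup_lt_iff zero_lt_one).2 fun μ hμ ↦ mod_cast h μ (hfin.mem_toFinset.1 hμ)
  calc spectralRadius ℂ (C.map (algebraMap ℝ ℂ)) ≤ r :=
        iSup₂_le fun μ hμ ↦ ENNReal.coe_le_coe.2 (Finset.le_sup (hfin.mem_toFinset.2 hμ))
    _ < 1 := ENNReal.coe_lt_one_iff.2 hr

section
attribute [local instance] Matrix.linftyOpNormedRing Matrix.linftyOpNormedAlgebra

lemma tendsto_pow_atTop_nhds_zero (h : SpectralRadiusLtOne C) :
    Tendsto (C ^ ·) atTop (𝓝 0) := by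
  set a := C.map (algebraMap ℝ ℂ)
  have : CompleteSpace (Matrix (Fin n) (Fin n) ℂ) := FiniteDimensional.complete ℂ _
  obtain ⟨r, hr0, hρr, hr1⟩ := ENNReal.lt_iff_exists_real_btwn.1 h.spectralRadius_lt_one
  have hgelfand := spectrum.pow_norm_pow_one_div_tendsto_nhds_spectralRadius a
  have hbound : ∀ᶠ k in atTop, ‖a ^ k‖ ≤ r ^ k := by
    filter_upwards [hgelfand.eventually_lt_const hρr, eventually_ne_atTop 0] with k hk hk0
    rw [ENNReal.ofReal_lt_ofReal_iff_of_nonneg (by positivity), one_div] at hk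
    calc ‖a ^ k‖ = (‖a ^ k‖ ^ (k⁻¹ : ℝ)) ^ k :=
          (Real.rpow_inv_natCast_pow (norm_nonneg _) hk0).symm
      _ ≤ r ^ k := by gcongr
  have ha : Tendsto (a ^ ·) atTop (𝓝 0) := squeeze_zero_norm' hbound
    (tendsto_pow_atTop_nhds_zero_of_lt_one hr0 (ENNReal.ofReal_lt_one.1 hr1))
  have hre : ∀ k, (a ^ k).map Complex.re = C ^ k := fun k ↦ by
    rw [← Matrix.map_pow, Matrix.map_map]; ext; simp
  simpa [Function.comp_def, hre] using
    ((continuous_id.matrix_map Complex.continuous_re).tendsto 0).comp ha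

end

lemma charpoly_eval_ne_zero (h : SpectralRadiusLtOne C) {t : ℝ} (ht : 1 ≤ t) :
    C.charpoly.eval t ≠ 0 := by
  intro hroot
  have hmem : algebraMap ℝ ℂ t ∈ spectrum ℂ (C.map (algebraMap ℝ ℂ)) :=
    mem_spectrum_of_isRoot_charpoly <| by
      rw [charpoly_map, IsRoot, eval_map_algebraMap, aeval_algebraMap_apply, coe_aeval_eq_eval,
        hroot, map_zero]
  have := h _ hmem
  rw [Complex.coe_algebraMap, Complex.norm_real, Real.norm_of_nonneg (by linarith)] at this
  linarith

lemma det_one_sub_smul_ne_zero (h : SpectralRadiusLtOne C) {t : ℝ} (ht : t ∈ Icc 0 1) :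
    (1 - t • C).det ≠ 0 := by
  obtain rfl | ht0 := ht.1.eq_or_lt
  · simp
  have hfactor : 1 - t • C = t • (scalar (Fin n) t⁻¹ - C) := by
    rw [scalar_apply, ← smul_one_eq_diagonal, smul_sub, smul_smul, mul_inv_cancel₀ ht0.ne',
      one_smul]
  rw [hfactor, det_smul, ← eval_charpoly]
  exact mul_ne_zero (pow_ne_zero _ ht0.ne') (h.charpoly_eval_ne_zero (one_le_inv₀ ht0 |>.2 ht.2))

lemma det_one_sub_pos (h : SpectralRadiusLtOne C) : 0 < (1 - C).det := by
  by_contra! hle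
  have hcont : ContinuousOn (fun t : ℝ ↦ (1 - t • C).det) (Icc 0 1) := by fun_prop
  obtain ⟨t, ht, hdet⟩ := intermediate_value_Icc' zero_le_one hcont ⟨by simpa using hle, by simp⟩
  exact h.det_one_sub_smul_ne_zero ht hdet

lemma submatrix (hC : ∀ i j, 0 ≤ C i j) (h : SpectralRadiusLtOne C) {k : ℕ} {e : Fin k → Fin n}
    (he : Injective e) : SpectralRadiusLtOne (C.submatrix e e) := by
  intro μ hμ
  by_contra! hμ1
  obtain ⟨v, hv0, hv⟩ := exists_mulVec_eq_smul_of_mem_spectrum hμ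
  rw [← submatrix_map] at hv
  set y : Fin n → ℝ := extend e (fun j ↦ ‖v j‖) 0
  have hy0 : 0 ≤ y := fun m ↦ by
    by_cases hm : ∃ i, e i = m
    · obtain ⟨i, rfl⟩ := hm; simp [y, he.extend_apply]
    · simp [y, extend_apply' _ _ _ hm]
  have hy : y ≤ C *ᵥ y := fun m ↦ by
    by_cases hm : ∃ i, e i = m
    · obtain ⟨i, rfl⟩ := hm
      calc y (e i) = ‖v i‖ := he.extend_apply _ _ _
        _ ≤ ‖μ‖ * ‖v i‖ := le_mul_of_one_le_left (norm_nonneg _) hμ1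
        _ ≤ (C.submatrix e e *ᵥ fun j ↦ ‖v j‖) i :=
            norm_mul_norm_le_mulVec_norm (fun _ _ ↦ hC _ _) hv i
        _ = ∑ j, C (e i) (e j) * y (e j) := by simp [mulVec, dotProduct, y, he.extend_apply]
        _ = ∑ m ∈ Finset.univ.map ⟨e, he⟩, C (e i) m * y m := by
            rw [Finset.sum_map]; rfl
        _ ≤ (C *ᵥ y) (e i) :=
            Finset.sum_le_univ_sum_of_nonneg fun m ↦ mul_nonneg (hC _ _) (hy0 m)
    · rw [show y m = 0 from extend_apply' _ _ _ hm]
      exact dotProduct_nonneg_of_nonneg (hC m) hy0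
  have hyz := le_antisymm (nonpos_of_le_mulVec hC h.tendsto_pow_atTop_nhds_zero hy) hy0
  exact hv0 (funext fun i ↦ by simpa [y, he.extend_apply] using congrFun hyz (e i))

end SpectralRadiusLtOne

lemma spectralRadiusLtOne_of_mulVec_lt {n : ℕ} {C : Matrix (Fin n) (Fin n) ℝ}
    (hC : ∀ i j, 0 ≤ C i j) {x : Fin n → ℝ} (hx : ∀ i, 0 < x i) (hCx : ∀ i, (C *ᵥ x) i < x i) :
    SpectralRadiusLtOne C := by
  intro μ hμ
  obtain ⟨v, hv0, hv⟩ := exists_mulVec_eq_smul_of_mem_spectrum hμ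
  obtain ⟨i₁, hi₁⟩ := Function.ne_iff.1 hv0
  obtain ⟨i₀, -, hi₀⟩ :=
    Finset.exists_max_image Finset.univ (fun i ↦ ‖v i‖ / x i) ⟨i₁, Finset.mem_univ _⟩
  set t := ‖v i₀‖ / x i₀
  have ht : 0 < t := (div_pos (norm_pos_iff.2 hi₁) (hx i₁)).trans_le (hi₀ i₁ (Finset.mem_univ _))
  have hvt : (fun j ↦ ‖v j‖) ≤ t • x := fun j ↦ (div_le_iff₀ (hx j)).1 (hi₀ j (Finset.mem_univ _))
  have hmain : ‖μ‖ * (t * x i₀) < 1 * (t * x i₀) :=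
    calc ‖μ‖ * (t * x i₀) = ‖μ‖ * ‖v i₀‖ := by rw [div_mul_cancel₀ _ (hx i₀).ne']
      _ ≤ (C *ᵥ fun j ↦ ‖v j‖) i₀ := norm_mul_norm_le_mulVec_norm hC hv i₀
      _ ≤ (C *ᵥ (t • x)) i₀ := mulVec_mono_of_nonneg hC hvt i₀
      _ = t * (C *ᵥ x) i₀ := by rw [mulVec_smul, Pi.smul_apply, smul_eq_mul]
      _ < 1 * (t * x i₀) := by rw [one_mul]; exact mul_lt_mul_of_pos_left (hCx i₀) ht
  exact lt_of_mul_lt_mul_right hmain (mul_pos ht (hx i₀)).le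

namespace Matrix

section Schur

variable {K : Type*} [Field K] {n : ℕ}

def pivotSchurComplement (A : Matrix (Fin (n + 1)) (Fin (n + 1)) K) : Matrix (Fin n) (Fin n) K :=
  of fun i j ↦ A i.succ j.succ - A i.succ 0 * A 0 j.succ / A 0 0

lemma det_eq_mul_det_pivotSchurComplement (A : Matrix (Fin (n + 1)) (Fin (n + 1)) K)
    (h : A 0 0 ≠ 0) : A.det = A 0 0 * A.pivotSchurComplement.det := by
  set c : Fin (n + 1) → K := Fin.cons 0 fun i ↦ A i.succ 0 / A 0 0
  set B : Matrix (Fin (n + 1)) (Fin (n + 1)) K := of fun i j ↦ A i j - c i * A 0 j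
  have hB : A.det = B.det := det_eq_of_forall_row_eq_smul_add_const c 0 rfl fun i j ↦ by
    simp [B, c]
  rw [hB, det_succ_column_zero, Fin.sum_univ_succ]
  simp [B, c, h, pivotSchurComplement, submatrix, div_mul_eq_mul_div]

lemma pivotSchurComplement_submatrix_castLE (A : Matrix (Fin (n + 1)) (Fin (n + 1)) K) {k : ℕ}
    (hk : k ≤ n) :
    (A.submatrix (Fin.castLE (Nat.succ_le_succ hk))
        (Fin.castLE (Nat.succ_le_succ hk))).pivotSchurComplement =
      A.pivotSchurComplement.submatrix (Fin.castLE hk) (Fin.castLE hk) := by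
  ext i j
  simp [pivotSchurComplement]

end Schur

def LeadingMinorsPos {K : Type*} [CommRing K] [PartialOrder K] {n : ℕ}
    (A : Matrix (Fin n) (Fin n) K) : Prop :=
  ∀ (k : ℕ) (hk : k ≤ n), 1 ≤ k → 0 < (A.submatrix (Fin.castLE hk) (Fin.castLE hk)).det

namespace LeadingMinorsPos

lemma zero_zero_pos {K : Type*} [CommRing K] [PartialOrder K] {n : ℕ}
    {A : Matrix (Fin (n + 1)) (Fin (n + 1)) K} (h : LeadingMinorsPos A) : 0 < A 0 0 := by
  simpa using h 1 (by omega) le_rfl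

lemma pivotSchurComplement {K : Type*} [Field K] [LinearOrder K] [IsStrictOrderedRing K] {n : ℕ}
    {A : Matrix (Fin (n + 1)) (Fin (n + 1)) K} (h : LeadingMinorsPos A) :
    LeadingMinorsPos A.pivotSchurComplement := by
  intro k hk _
  have hdet := h (k + 1) (Nat.succ_le_succ hk) (by omega)
  have h00 : A.submatrix (Fin.castLE (Nat.succ_le_succ hk)) (Fin.castLE (Nat.succ_le_succ hk)) 0 0 =
      A 0 0 := rfl
  rw [det_eq_mul_det_pivotSchurComplement _ (h00 ▸ h.zero_zero_pos.ne'), h00,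
    pivotSchurComplement_submatrix_castLE _ hk] at hdet
  exact pos_of_mul_pos_right hdet h.zero_zero_pos.le

end LeadingMinorsPos

variable {n : ℕ}

def eliminateFirst {K : Type*} [Field K] (C : Matrix (Fin (n + 1)) (Fin (n + 1)) K) :
    Matrix (Fin n) (Fin n) K :=
  of fun i j ↦ C i.succ j.succ + C i.succ 0 * C 0 j.succ / (1 - C 0 0)

lemma pivotSchurComplement_one_sub {K : Type*} [Field K]
    (C : Matrix (Fin (n + 1)) (Fin (n + 1)) K) :
    (1 - C).pivotSchurComplement = 1 - C.eliminateFirst := by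
  ext i j
  simp [pivotSchurComplement, eliminateFirst, one_apply, (Fin.succ_ne_zero _).symm]
  ring

variable {C : Matrix (Fin (n + 1)) (Fin (n + 1)) ℝ}

lemma eliminateFirst_nonneg (hC : ∀ i j, 0 ≤ C i j) (h00 : C 0 0 < 1) (i j : Fin n) :
    0 ≤ C.eliminateFirst i j :=
  add_nonneg (hC _ _) (div_nonneg (mul_nonneg (hC _ _) (hC _ _)) (sub_pos.2 h00).le)

lemma exists_pos_mulVec_lt_of_eliminateFirst (hC : ∀ i j, 0 ≤ C i j) (h00 : C 0 0 < 1)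
    {y : Fin n → ℝ} (hy : ∀ i, 0 < y i) (hCy : ∀ i, (C.eliminateFirst *ᵥ y) i < y i) :
    ∃ x : Fin (n + 1) → ℝ, (∀ i, 0 < x i) ∧ ∀ i, (C *ᵥ x) i < x i := by
  set b := 1 - C 0 0
  have hb : 0 < b := sub_pos.2 h00
  set T := ∑ j, C 0 j.succ * y j
  have hT : 0 ≤ T := Finset.sum_nonneg fun j _ ↦ mul_nonneg (hC _ _) (hy j).le
  have hrow_zero : ∀ ε, (C *ᵥ Fin.cons ((T + ε) / b) y) 0 = (T + ε) / b - ε := fun ε ↦ by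
    simp only [mulVec, dotProduct, Fin.sum_univ_succ, Fin.cons_zero, Fin.cons_succ]
    field_simp
    ring
  have hrow_succ : ∀ ε i, (C *ᵥ Fin.cons ((T + ε) / b) y) i.succ =
      (C.eliminateFirst *ᵥ y) i + C i.succ 0 * ε / b := fun ε i ↦ by
    have hsum : ∑ j, C i.succ 0 * C 0 j.succ / (1 - C 0 0) * y j = C i.succ 0 * T / b := by
      simp only [T, Finset.mul_sum, Finset.sum_div]
      exact Finset.sum_congr rfl fun _ _ ↦ by ring
    simp only [mulVec, dotProduct, Fin.sum_univ_succ, Fin.cons_zero, Fin.cons_succ,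
      eliminateFirst, of_apply, add_mul, Finset.sum_add_distrib, hsum]
    ring
  have hsmall : ∀ᶠ ε in 𝓝 (0 : ℝ), ∀ i, (C.eliminateFirst *ᵥ y) i + C i.succ 0 * ε / b < y i :=
    eventually_all.2 fun i ↦ ContinuousAt.eventually_lt (by fun_prop) continuousAt_const
      (by simpa using hCy i)
  obtain ⟨ε, hε, hε0 : 0 < ε⟩ :=
    ((hsmall.filter_mono nhdsWithin_le_nhds).and (self_mem_nhdsWithin (s := Ioi 0))).exists
  refine ⟨Fin.cons ((T + ε) / b) y, fun i ↦ ?_, fun i ↦ ?_⟩ <;> cases i using Fin.cases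
  · exact div_pos (by linarith) hb
  · exact hy _
  · rw [hrow_zero]; exact sub_lt_self _ hε0
  · rw [hrow_succ]; exact hε _

end Matrix

theorem exists_pos_mulVec_lt_of_leadingMinorsPos :
    ∀ {n : ℕ} {C : Matrix (Fin n) (Fin n) ℝ}, (∀ i j, 0 ≤ C i j) → LeadingMinorsPos (1 - C) →
      ∃ x : Fin n → ℝ, (∀ i, 0 < x i) ∧ ∀ i, (C *ᵥ x) i < x i
  | 0, _, _, _ => ⟨0, finZeroElim, finZeroElim⟩
  | _ + 1, C, hC, h => by
    have h00 : C 0 0 < 1 := by simpa using h.zero_zero_pos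
    obtain ⟨y, hy, hCy⟩ := exists_pos_mulVec_lt_of_leadingMinorsPos
      (eliminateFirst_nonneg hC h00) (pivotSchurComplement_one_sub C ▸ h.pivotSchurComplement)
    exact exists_pos_mulVec_lt_of_eliminateFirst hC h00 hy hCy

theorem spectral_radius_lt_one_iff_leading_principal_minors_pos
    (D : ℕ) (C : Matrix (Fin D) (Fin D) ℝ) (hC : ∀ i j, 0 ≤ C i j) :
    SpectralRadiusLtOne C ↔
      ∀ (k : ℕ) (hk : k ≤ D), 1 ≤ k →
        0 < Matrix.det ((1 - C).submatrix
          (fun i : Fin k => Fin.castLE hk i) (fun j : Fin k => Fin.castLE hk j)) := by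
  constructor
  · intro h k hk _
    have hdet := (h.submatrix hC (Fin.castLE_injective hk)).det_one_sub_pos
    rwa [← submatrix_one _ (Fin.castLE_injective hk)] at hdet
  · intro h
    obtain ⟨x, hx, hCx⟩ := exists_pos_mulVec_lt_of_leadingMinorsPos hC h
    exact spectralRadiusLtOne_of_mulVec_lt hC hx hCx
end

section
/- A distribution factorizing over the cycle graph has the reciprocal property: let 𝒳 be a nonempty finite set, N ≥ 3, and let p be a probability mass function on (Fin(N+1) → 𝒳) of the form p(x) = (1/Z)·∏_{k=0}^{N} ψ_k(x_k, x_{k+1 mod N+1}) for nonnegative functions ψ_k : 𝒳 × 𝒳 → ℝ and normalizing constant Z > 0. Then for all 0 ≤ t₀ < t₁ ≤ N, the interior variables {X_r : t₀ < r < t₁} and the exterior variables {X_r : r < t₀ or r > t₁} are conditionally independent given (X_{t₀}, X_{t₁}): for every assignment a of the interior coordinates, b of the exterior coordinates, and values c, d ∈ 𝒳 with P(X_{t₀}=c, X_{t₁}=d) > 0, one has P(X_I = a, X_O = b ∣ X_{t₀}=c, X_{t₁}=d) = P(X_I = a ∣ X_{t₀}=c, X_{t₁}=d) · P(X_O = b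 ∣ X_{t₀}=c, X_{t₁}=d), where I = {r : t₀ < r < t₁} and O = {r : r < t₀ or r > t₁}. -/
/-!
Exchange argument. For two configurations `x, y` with the same values at `t₀` and `t₁`, swap
their interiors on `(t₀, t₁)`. Every edge `(k, k + 1)` of the cycle either lies in `[t₀, t₁]`
or misses `(t₀, t₁)`, so the product of the weights of the two new configurations equals that
of `x` and `y`. This swap is an involution on pairs, and reindexing the double sum by it turns
`P(I ∩ O ∩ B) · P(B)` into `P(I ∩ B) · P(O ∩ B)`, which is the conditional independence.
-/

open Classical in
/-- Probability of an event under a probability mass function `p` on configurations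
`Fin (N+1) → 𝒳`: the sum of `p` over all configurations satisfying the event. -/
noncomputable def Pr {N : ℕ} {X : Type} [Fintype X] (p : (Fin (N + 1) → X) → ℝ)
    (A : (Fin (N + 1) → X) → Prop) : ℝ :=
  ∑ x : Fin (N + 1) → X, if A x then p x else 0

open Set

theorem Set.piecewise_piecewise_piecewise {ι β : Type*} (s : Set ι) [∀ i, Decidable (i ∈ s)]
    (x y : ι → β) :
    s.piecewise (s.piecewise x y) (s.piecewise y x) = x := by
  funext i
  by_cases hi : i ∈ s <;> simp [hi]

section Exchange

variable {N : ℕ} {X : Type} [Fintype X] {p : (Fin (N + 1) → X) → ℝ}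

open Classical in
theorem Pr_mul_Pr_eq_sum (A C : (Fin (N + 1) → X) → Prop) :
    Pr p A * Pr p C = ∑ z : (Fin (N + 1) → X) × (Fin (N + 1) → X),
      if A z.1 ∧ C z.2 then p z.1 * p z.2 else 0 := by
  rw [Pr, Pr, Finset.sum_mul_sum, Fintype.sum_prod_type]
  refine Finset.sum_congr rfl fun x _ => Finset.sum_congr rfl fun y _ => ?_
  by_cases hA : A x <;> by_cases hC : C y <;> simp [hA, hC]

/-- Conditional independence, in cross-multiplied form, of an event `A` read on `s` and an
event `C` read off `s` given `B`, for `p` invariant under exchanging `s`-coordinates. -/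
theorem Pr_and_and_mul_Pr_eq (s : Set (Fin (N + 1))) [∀ i, Decidable (i ∈ s)]
    {A C B : (Fin (N + 1) → X) → Prop}
    (hA : ∀ x y, A (s.piecewise x y) ↔ A x) (hC : ∀ x y, C (s.piecewise x y) ↔ C y)
    (hB : ∀ x y, B (s.piecewise x y) ↔ B y)
    (hp : ∀ x y, B x → B y → p (s.piecewise x y) * p (s.piecewise y x) = p x * p y) :
    Pr p (fun x => A x ∧ C x ∧ B x) * Pr p B =
      Pr p (fun x => A x ∧ B x) * Pr p (fun x => C x ∧ B x) := by
  rw [Pr_mul_Pr_eq_sum, Pr_mul_Pr_eq_sum]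
  let swap : (Fin (N + 1) → X) × (Fin (N + 1) → X) → (Fin (N + 1) → X) × (Fin (N + 1) → X) :=
    fun z => (s.piecewise z.1 z.2, s.piecewise z.2 z.1)
  have swap_involutive : Function.Involutive swap := fun z =>
    Prod.ext (s.piecewise_piecewise_piecewise z.1 z.2) (s.piecewise_piecewise_piecewise z.2 z.1)
  refine Fintype.sum_bijective swap swap_involutive.bijective _ _ fun ⟨x, y⟩ => ?_
  dsimp only [swap]
  rw [hA x y, hB x y, hC y x, hB y x]
  by_cases hxy : A x ∧ C x ∧ B x ∧ B y
  · rw [if_pos (by tauto), if_pos (by tauto), hp x y hxy.2.2.1 hxy.2.2.2]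
  · rw [if_neg (by tauto), if_neg (by tauto)]

end Exchange

section Cycle

variable {N : ℕ} {X : Type}

theorem Fin.add_one_mem_Icc_or_notMem_Ioo (t₀ t₁ k : Fin (N + 1)) :
    (k ∈ Icc t₀ t₁ ∧ k + 1 ∈ Icc t₀ t₁) ∨ (k ∉ Ioo t₀ t₁ ∧ k + 1 ∉ Ioo t₀ t₁) := by
  have hsucc := Fin.val_add_one k
  have ht₁ := t₁.isLt
  simp only [mem_Icc, mem_Ioo, Fin.le_def, Fin.lt_def, Fin.ext_iff, Fin.val_last] at hsucc ⊢
  split at hsucc <;> omega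

theorem piecewise_Ioo_eq_of_mem_Icc {t₀ t₁ : Fin (N + 1)} {x y : Fin (N + 1) → X}
    (h₀ : x t₀ = y t₀) (h₁ : x t₁ = y t₁) {i : Fin (N + 1)} (hi : i ∈ Icc t₀ t₁) :
    (Ioo t₀ t₁).piecewise x y i = x i := by
  by_cases hio : i ∈ Ioo t₀ t₁
  · exact piecewise_eq_of_mem _ _ _ hio
  · rw [piecewise_eq_of_notMem _ _ _ hio]
    rcases eq_endpoints_or_mem_Ioo_of_mem_Icc hi with rfl | rfl | h
    exacts [h₀.symm, h₁.symm, absurd h hio]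

theorem prod_cycle_piecewise_Ioo_mul {M : Type*} [CommMonoid M] (ψ : Fin (N + 1) → X → X → M)
    {t₀ t₁ : Fin (N + 1)} {x y : Fin (N + 1) → X} (h₀ : x t₀ = y t₀) (h₁ : x t₁ = y t₁) :
    (∏ k, ψ k ((Ioo t₀ t₁).piecewise x y k) ((Ioo t₀ t₁).piecewise x y (k + 1))) *
        ∏ k, ψ k ((Ioo t₀ t₁).piecewise y x k) ((Ioo t₀ t₁).piecewise y x (k + 1)) =
      (∏ k, ψ k (x k) (x (k + 1))) * ∏ k, ψ k (y k) (y (k + 1)) := by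
  rw [← Finset.prod_mul_distrib, ← Finset.prod_mul_distrib]
  refine Finset.prod_congr rfl fun k _ => ?_
  rcases Fin.add_one_mem_Icc_or_notMem_Ioo t₀ t₁ k with ⟨hk, hk'⟩ | ⟨hk, hk'⟩
  · rw [piecewise_Ioo_eq_of_mem_Icc h₀ h₁ hk, piecewise_Ioo_eq_of_mem_Icc h₀ h₁ hk',
      piecewise_Ioo_eq_of_mem_Icc h₀.symm h₁.symm hk,
      piecewise_Ioo_eq_of_mem_Icc h₀.symm h₁.symm hk']
  · simp only [piecewise_eq_of_notMem _ _ _ hk, piecewise_eq_of_notMem _ _ _ hk']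
    exact mul_comm _ _

end Cycle

theorem div_eq_div_mul_div_of_mul_eq {K : Type*} [Field K] {u v w s : K} (h : u * s = v * w) :
    u / s = v / s * (w / s) := by
  rcases eq_or_ne s 0 with rfl | hs
  · simp
  · rw [div_mul_div_comm, ← h, mul_div_mul_right _ _ hs]

theorem cycle_factorization_implies_reciprocal_general
    {X : Type} [Fintype X] (N : ℕ)
    (ψ : Fin (N + 1) → X → X → ℝ)
    (Z : ℝ)
    (p : (Fin (N + 1) → X) → ℝ)
    (hp : ∀ x, p x = (1 / Z) * ∏ k : Fin (N + 1), ψ k (x k) (x (k + 1)))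
    (t₀ t₁ : Fin (N + 1))
    (a b : Fin (N + 1) → X) (c d : X) :
    Pr p (fun x => (∀ r, t₀ < r → r < t₁ → x r = a r) ∧
        (∀ r, r < t₀ ∨ t₁ < r → x r = b r) ∧ x t₀ = c ∧ x t₁ = d) /
      Pr p (fun x => x t₀ = c ∧ x t₁ = d) =
    (Pr p (fun x => (∀ r, t₀ < r → r < t₁ → x r = a r) ∧ x t₀ = c ∧ x t₁ = d) /
      Pr p (fun x => x t₀ = c ∧ x t₁ = d)) *
    (Pr p (fun x => (∀ r, r < t₀ ∨ t₁ < r → x r = b r) ∧ x t₀ = c ∧ x t₁ = d) /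
      Pr p (fun x => x t₀ = c ∧ x t₁ = d)) := by
  have hO : ∀ {r}, r < t₀ ∨ t₁ < r → r ∉ Ioo t₀ t₁ := fun hr hI =>
    hr.elim hI.1.not_gt hI.2.not_gt
  have ht₀ : t₀ ∉ Ioo t₀ t₁ := fun h => h.1.false
  have ht₁ : t₁ ∉ Ioo t₀ t₁ := fun h => h.2.false
  refine div_eq_div_mul_div_of_mul_eq
    (Pr_and_and_mul_Pr_eq (Ioo t₀ t₁) (fun x y => ?_) (fun x y => ?_) (fun x y => ?_) ?_)
  · simp +contextual only [piecewise_eq_of_mem _ _ _ (mem_Ioo.2 ⟨_, _⟩)]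
  · simp +contextual only [piecewise_eq_of_notMem _ _ _ (hO _)]
  · rw [piecewise_eq_of_notMem _ _ _ ht₀, piecewise_eq_of_notMem _ _ _ ht₁]
  · rintro x y ⟨hx₀, hx₁⟩ ⟨hy₀, hy₁⟩
    rw [hp, hp, hp, hp, mul_mul_mul_comm,
      prod_cycle_piecewise_Ioo_mul ψ (hx₀.trans hy₀.symm) (hx₁.trans hy₁.symm), mul_mul_mul_comm]

/-- A distribution factorizing over the cycle graph (with index arithmetic mod `N+1`)
has the reciprocal property: given the boundary values `X_{t₀}, X_{t₁}`, the interior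
variables and the exterior variables are conditionally independent. -/
theorem cycle_factorization_implies_reciprocal
    {X : Type} [Fintype X] [Nonempty X] (N : ℕ) (hN : 3 ≤ N)
    (ψ : Fin (N + 1) → X → X → ℝ) (hψ : ∀ k a b, 0 ≤ ψ k a b)
    (Z : ℝ) (hZ : 0 < Z)
    (p : (Fin (N + 1) → X) → ℝ)
    (hp : ∀ x, p x = (1 / Z) * ∏ k : Fin (N + 1), ψ k (x k) (x (k + 1)))
    (hpmf : ∑ x : Fin (N + 1) → X, p x = 1)
    (t₀ t₁ : Fin (N + 1)) (ht : t₀ < t₁)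
    (a b : Fin (N + 1) → X) (c d : X)
    (hpos : 0 < Pr p (fun x => x t₀ = c ∧ x t₁ = d)) :
    Pr p (fun x => (∀ r, t₀ < r → r < t₁ → x r = a r) ∧
        (∀ r, r < t₀ ∨ t₁ < r → x r = b r) ∧ x t₀ = c ∧ x t₁ = d) /
      Pr p (fun x => x t₀ = c ∧ x t₁ = d) =
    (Pr p (fun x => (∀ r, t₀ < r → r < t₁ → x r = a r) ∧ x t₀ = c ∧ x t₁ = d) /
      Pr p (fun x => x t₀ = c ∧ x t₁ = d)) *
    (Pr p (fun x => (∀ r, r < t₀ ∨ t₁ < r → x r = b r) ∧ x t₀ = c ∧ x t₁ = d) /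
      Pr p (fun x => x t₀ = c ∧ x t₁ = d)) :=
  cycle_factorization_implies_reciprocal_general N ψ Z p hp t₀ t₁ a b c d
end
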